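/- arXiv:2306.09972 — 13 statements merged into one kernel-verified Lean document; each statement's English description precedes it below -/
import Mathlib

section
/- Let q = 2^m with m a positive integer and let K be a finite field with q^3 elements. Let A, B ∈ K satisfy A^(q^2+q+1) = B^(1+q+q^2), (A^q·B)^q = A^q·B, A^q·B ≠ 0 and A^q·B ≠ 1. Then f_{A,B}(x) = x^(q^2−q+1) + A·x^(q^2) + B·x is a bijection of K. -/
theorem stmt_1 (m : ℕ) (hm : 1 ≤ m) (q : ℕ) (hq : q = 2 ^ m)
    (K : Type*) [Field K] [Fintype K] (hK : Fintype.card K = q ^ 3)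
    (A B : K) (h1 : A ^ (q ^ 2 + q + 1) = B ^ (1 + q + q ^ 2))
    (h2 : (A ^ q * B) ^ q = A ^ q * B) (h3 : A ^ q * B ≠ 0) (h4 : A ^ q * B ≠ 1) :
    Function.Bijective (fun x : K => x ^ (q ^ 2 - q + 1) + A * x ^ (q ^ 2) + B * x) := by
  -- numeric facts
  have hq2 : 2 ≤ q := by
    rw [hq]
    calc 2 = 2 ^ 1 := rfl
    _ ≤ 2 ^ m := Nat.pow_le_pow_right (by norm_num) hm
  have hq0 : q ≠ 0 := by omega
  have hqle : q ≤ q ^ 2 := Nat.le_self_pow (by norm_num) q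
  -- characteristic 2
  obtain ⟨p, hp⟩ := CharP.exists K
  haveI : CharP K p := hp
  obtain ⟨n, hpn, hcard⟩ := FiniteField.card K p
  have hp2 : p = 2 := by
    have h23 : Fintype.card K = 2 ^ (3 * m) := by
      rw [hK, hq, ← pow_mul, Nat.mul_comm]
    have hdvd : p ∣ 2 ^ (3 * m) := by
      rw [← h23, hcard]
      exact dvd_pow_self p n.pos.ne'
    exact (Nat.prime_dvd_prime_iff_eq hpn Nat.prime_two).mp (hpn.dvd_of_dvd_pow hdvd)
  subst hp2
  haveI : Fact (Nat.Prime 2) := ⟨Nat.prime_two⟩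
  have htwo : (2 : K) = 0 := by
    have := CharP.cast_eq_zero K 2
    exact_mod_cast this
  -- Frobenius facts
  have hfr : ∀ u v : K, (u + v) ^ q = u ^ q + v ^ q := by
    intro u v; rw [hq]; exact add_pow_char_pow u v 2 m
  have hqq : ∀ u : K, (u ^ q) ^ q = u ^ q ^ 2 := by
    intro u; rw [← pow_mul, pow_two]
  have hq3 : ∀ u : K, (u ^ q ^ 2) ^ q = u := by
    intro u
    rw [← pow_mul]
    have e : q ^ 2 * q = q ^ 3 := by ring
    rw [e, ← hK]
    exact FiniteField.pow_card u
  have hneg : ∀ v : K, -v = v := fun v => CharTwo.neg_eq v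
  have hfs : ∀ u v : K, (u - v) ^ q = u ^ q - v ^ q := by
    intro u v
    calc (u - v) ^ q = (u + v) ^ q := by rw [sub_eq_add_neg, hneg]
      _ = u ^ q + v ^ q := hfr u v
      _ = u ^ q - v ^ q := by rw [sub_eq_add_neg, hneg]
  -- conjugates of the hypotheses
  have hc2 : A ^ q ^ 2 * B ^ q = A ^ q * B := by
    have h' := h2
    rwa [mul_pow, hqq] at h'
  have hc3 : A * B ^ q ^ 2 = A ^ q * B := by
    have h' := congrArg (fun t : K => t ^ q) hc2
    simp only [mul_pow, hqq, hq3] at h'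
    rw [h', hc2]
  have hN : A * A ^ q * A ^ q ^ 2 = B * B ^ q * B ^ q ^ 2 := by
    simp only [pow_add, pow_one] at h1
    linear_combination h1
  have hcne : (1 + A ^ q * B) ≠ 0 := by
    intro h
    exact h4 (by linear_combination h - htwo)
  -- main multiplication identity
  have epow : ∀ z : K, z ^ q * (z ^ (q ^ 2 - q + 1) + A * z ^ (q ^ 2) + B * z)
      = z ^ q ^ 2 * z + A * (z ^ q ^ 2 * z ^ q) + B * (z * z ^ q) := by
    intro z
    have e1 : z ^ q * z ^ (q ^ 2 - q + 1) = z ^ q ^ 2 * z := by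
      rw [← pow_add, ← pow_succ]
      congr 1
      omega
    calc z ^ q * (z ^ (q ^ 2 - q + 1) + A * z ^ (q ^ 2) + B * z)
        = z ^ q * z ^ (q ^ 2 - q + 1) + A * (z ^ q ^ 2 * z ^ q) + B * (z * z ^ q) := by ring
      _ = _ := by rw [e1]
  -- Phase A : f z = 0 → z = 0
  have key0 : ∀ z : K, z ^ (q ^ 2 - q + 1) + A * z ^ (q ^ 2) + B * z = 0 → z = 0 := by
    intro z hz
    have F0 : z ^ q ^ 2 * z + A * (z ^ q ^ 2 * z ^ q) + B * (z * z ^ q) = 0 := by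
      rw [← epow z, hz, mul_zero]
    have F1 : z * z ^ q + A ^ q * (z * z ^ q ^ 2) + B ^ q * (z ^ q * z ^ q ^ 2) = 0 := by
      have h' := congrArg (fun t : K => t ^ q) F0
      simp only [mul_pow, hfr, hqq, hq3, zero_pow hq0] at h'
      linear_combination h'
    have F2 : z ^ q * z ^ q ^ 2 + A ^ q ^ 2 * (z ^ q * z) + B ^ q ^ 2 * (z ^ q ^ 2 * z) = 0 := by
      have h' := congrArg (fun t : K => t ^ q) F1
      simp only [mul_pow, hfr, hqq, hq3, zero_pow hq0] at h'
      linear_combination h'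
    have key : (1 + A ^ q * B) * (z * z ^ q) = 0 := by
      linear_combination ((B^q)*(B^(q^2)) - (A^q)) * F0 + (1 - A*(B^(q^2))) * F1
        + (-(B^q) + A*(A^q)) * F2
        + (z*z^q) * hc2 + (z*z^q) * hc3 - (z*z^q) * hN
        - (z*z^q) * (B*(B^q)*(B^(q^2)) + (-2)*(A^q)*B) * htwo
    have hzz : z * z ^ q = 0 := (mul_eq_zero.mp key).resolve_left hcne
    rcases mul_eq_zero.mp hzz with h | h
    · exact h
    · exact (pow_eq_zero_iff hq0).mp h
  -- injectivity
  have hinj : Function.Injective (fun x : K => x ^ (q ^ 2 - q + 1) + A * x ^ (q ^ 2) + B * x) := by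
    intro x y hxy
    dsimp only at hxy
    have hf0 : (0 : K) ^ (q ^ 2 - q + 1) + A * (0 : K) ^ (q ^ 2) + B * 0 = 0 := by
      rw [zero_pow (by omega : q ^ 2 - q + 1 ≠ 0), zero_pow (by omega : q ^ 2 ≠ 0)]
      ring
    by_cases hx0 : x = 0
    · subst hx0
      rw [hf0] at hxy
      exact (key0 y hxy.symm).symm
    by_cases hy0 : y = 0
    · subst hy0
      rw [hf0] at hxy
      exact key0 x hxy
    -- main case
    obtain ⟨g, hgne, hy⟩ : ∃ g : K, g ≠ 0 ∧ y = g * x :=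
      ⟨y * x⁻¹, mul_ne_zero hy0 (inv_ne_zero hx0), by field_simp⟩
    by_cases hg1 : g = 1
    · rw [hg1, one_mul] at hy
      exact hy.symm
    exfalso
    -- the three conjugate relations
    have H0 : y ^ q * (x ^ q ^ 2 * x + A * (x ^ q ^ 2 * x ^ q) + B * (x * x ^ q))
        = x ^ q * (y ^ q ^ 2 * y + A * (y ^ q ^ 2 * y ^ q) + B * (y * y ^ q)) := by
      linear_combination (-(y^q)) * (epow x) + (x^q) * (epow y) + (x^q*y^q) * hxy
    have H1 : y ^ q ^ 2 * (x * x ^ q + A ^ q * (x * x ^ q ^ 2) + B ^ q * (x ^ q * x ^ q ^ 2))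
        = x ^ q ^ 2 * (y * y ^ q + A ^ q * (y * y ^ q ^ 2) + B ^ q * (y ^ q * y ^ q ^ 2)) := by
      have h' := congrArg (fun t : K => t ^ q) H0
      simp only [mul_pow, hfr, hqq, hq3] at h'
      linear_combination h'
    have H2 : y * (x ^ q * x ^ q ^ 2 + A ^ q ^ 2 * (x ^ q * x) + B ^ q ^ 2 * (x ^ q ^ 2 * x))
        = x * (y ^ q * y ^ q ^ 2 + A ^ q ^ 2 * (y ^ q * y) + B ^ q ^ 2 * (y ^ q ^ 2 * y)) := by
      have h' := congrArg (fun t : K => t ^ q) H1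
      simp only [mul_pow, hfr, hqq, hq3] at h'
      linear_combination h'
    rw [hy] at H0 H1 H2
    simp only [mul_pow] at H0 H1 H2
    -- nonvanishing of w and its conjugates
    have hw : g ^ q - g * g ^ q ^ 2 ≠ 0 := by
      intro h0
      apply hg1
      have e1 : g ^ q = g * g ^ q ^ 2 := by linear_combination h0
      have e2 : g ^ q ^ 2 = g ^ q * g := by
        have h' := congrArg (fun t : K => t ^ q) e1
        simp only [mul_pow, hqq, hq3] at h'
        exact h'
      have e3 : g ^ q * 1 = g ^ q * (g * g) := by
        calc g ^ q * 1 = g * g ^ q ^ 2 := by rw [mul_one]; exact e1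
          _ = g * (g ^ q * g) := by rw [e2]
          _ = g ^ q * (g * g) := by ring
      have hgq : g ^ q ≠ 0 := pow_ne_zero q hgne
      have e4 : g * g = 1 := (mul_left_cancel₀ hgq e3).symm
      have e5 : (g - 1) ^ 2 = 0 := by linear_combination e4 + (1 - g) * htwo
      have e6 : g - 1 = 0 := (pow_eq_zero_iff (by norm_num : 2 ≠ 0)).mp e5
      exact sub_eq_zero.mp e6
    have hw1 : g ^ q ^ 2 - g * g ^ q ≠ 0 := by
      have e : (g ^ q - g * g ^ q ^ 2) ^ q = g ^ q ^ 2 - g * g ^ q := by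
        rw [hfs, mul_pow, hqq, hq3]
        ring
      rw [← e]
      exact pow_ne_zero q hw
    have hw2 : g - g ^ q * g ^ q ^ 2 ≠ 0 := by
      have e : (g ^ q ^ 2 - g * g ^ q) ^ q = g - g ^ q * g ^ q ^ 2 := by
        rw [hfs, mul_pow, hqq, hq3]
      rw [← e]
      exact pow_ne_zero q hw1
    -- the certificate
    have big : (1 + A ^ q * B)
        * ((g ^ q - g * g ^ q ^ 2) * (g ^ q ^ 2 - g * g ^ q) * (g - g ^ q * g ^ q ^ 2))
        * ((x ^ q ^ 2 * x) * (x * x ^ q * x ^ q ^ 2)) = 0 := by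
      linear_combination
        (((g^q)*(g^(q^2))^2 - g*(g^(q^2)) - g*(g^q)^2*(g^(q^2)) + g^2*(g^q) + (A^(q^2))*(B^q)*g*(g^(q^2)) + (-2)*(A^(q^2))*(B^q)*g*(g^q)*(g^(q^2)) + (A^(q^2))*(B^q)*g*(g^q)^2*(g^(q^2))) * (x * (x^(q^2)))) * H0
        + ((-B*(g^q)^2*(g^(q^2)) + B*g*(g^q) + B*g*(g^q)^2*(g^(q^2)) - B*g^2*(g^q) - A*(A^(q^2))*g*(g^q) + A*(A^(q^2))*g*(g^q)*(g^(q^2)) + A*(A^(q^2))*g*(g^q)^2 - A*(A^(q^2))*g*(g^q)^2*(g^(q^2))) * (x * (x^q))) * H1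
        + ((-B*(B^q)*(g^q)*(g^(q^2)) + B*(B^q)*(g^q)^2*(g^(q^2)) + B*(B^q)*g*(g^q)*(g^(q^2)) - B*(B^q)*g*(g^q)^2*(g^(q^2)) + A*(g^q)*(g^(q^2)) - A*(g^q)*(g^(q^2))^2 - A*g*(g^q)^2 + A*g*(g^q)^2*(g^(q^2))) * ((x^q) * (x^(q^2)))) * H2
        - ((x^(q^2)*x)*(x*x^q*x^(q^2))) * (
            (g*(g^q)*(g^(q^2)) + (-2)*g*(g^q)^2*(g^(q^2)) + g*(g^q)^3*(g^(q^2)) - g^2*(g^(q^2))^2 + (2)*g^2*(g^q)*(g^(q^2))^2 - g^2*(g^q)^2*(g^(q^2))^2) * hc2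
          + (g*(g^q)*(g^(q^2)) + (-2)*g*(g^q)*(g^(q^2))^2 + g*(g^q)*(g^(q^2))^3 - g^2*(g^q)^2 + (2)*g^2*(g^q)^2*(g^(q^2)) - g^2*(g^q)^2*(g^(q^2))^2) * hc3
          + (-g*(g^q)*(g^(q^2)) + g*(g^q)*(g^(q^2))^2 + g*(g^q)^2*(g^(q^2)) - g*(g^q)^2*(g^(q^2))^2 + g^2*(g^q)*(g^(q^2)) - g^2*(g^q)*(g^(q^2))^2 - g^2*(g^q)^2*(g^(q^2)) + g^2*(g^q)^2*(g^(q^2))^2) * hN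
          + ((g^q)^2*(g^(q^2))^2 - g*(g^q)*(g^(q^2)) - g*(g^q)*(g^(q^2))^3 - g*(g^q)^3*(g^(q^2)) + g^2*(g^(q^2))^2 + g^2*(g^q)^2 + g^2*(g^q)^2*(g^(q^2))^2 - g^3*(g^q)*(g^(q^2)) - B*(B^q)*(B^(q^2))*g*(g^q)*(g^(q^2)) + B*(B^q)*(B^(q^2))*g*(g^q)*(g^(q^2))^2 + B*(B^q)*(B^(q^2))*g*(g^q)^2*(g^(q^2)) - B*(B^q)*(B^(q^2))*g*(g^q)^2*(g^(q^2))^2 + B*(B^q)*(B^(q^2))*g^2*(g^q)*(g^(q^2)) - B*(B^q)*(B^(q^2))*g^2*(g^q)*(g^(q^2))^2 - B*(B^q)*(B^(q^2))*g^2*(g^q)^2*(g^(q^2)) + B*(B^q)*(B^(q^2))*g^2*(g^q)^2*(g^(q^2))^2 + (A^q)*B*g*(g^q)*(g^(q^2)) - (A^q)*B*g*(g^q)*(g^(q^2))^2 - (A^q)*B*g*(g^q)^2*(g^(q^2)) + (A^q)*B*g*(g^q)^2*(g^(q^2))^2 - (A^q)*B*g^2*(g^q)*(g^(q^2)) + (A^q)*B*g^2*(g^q)*(g^(q^2))^2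 + (A^q)*B*g^2*(g^q)^2*(g^(q^2)) - (A^q)*B*g^2*(g^q)^2*(g^(q^2))^2) * htwo)
    have hx1 : x ^ q ≠ 0 := pow_ne_zero q hx0
    have hx2 : x ^ q ^ 2 ≠ 0 := pow_ne_zero _ hx0
    exact absurd big (mul_ne_zero (mul_ne_zero hcne
      (mul_ne_zero (mul_ne_zero hw hw1) hw2))
      (mul_ne_zero (mul_ne_zero hx2 hx0) (mul_ne_zero (mul_ne_zero hx0 hx1) hx2)))
  exact Finite.injective_iff_bijective.mp hinj
end

section
/- Let q = 2^m with m a positive integer and let K be a finite field with q^3 elements. Let A, B ∈ K. If f_{A,B}(x) = x^(q^2−q+1) + A·x^(q^2) + B·x is a bijection of K, then for all x, y ∈ K with x ≠ 0, y ≠ 0 and x ≠ y one has y^q·(x^(q^2+1) + A·x^(q^2+q) + B·x^(q+1)) + x^q·(y^(q^2+1) + A·y^(q^2+q) + B·y^(q+1)) ≠ 0. -/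
theorem stmt_3 (m : ℕ) (hm : 1 ≤ m) (q : ℕ) (hq : q = 2 ^ m)
    (K : Type*) [Field K] [Fintype K] (hK : Fintype.card K = q ^ 3)
    (A B : K)
    (hPP : Function.Bijective (fun x : K => x ^ (q ^ 2 - q + 1) + A * x ^ (q ^ 2) + B * x)) :
    ∀ x y : K, x ≠ 0 → y ≠ 0 → x ≠ y →
      y ^ q * (x ^ (q ^ 2 + 1) + A * x ^ (q ^ 2 + q) + B * x ^ (q + 1)) +
        x ^ q * (y ^ (q ^ 2 + 1) + A * y ^ (q ^ 2 + q) + B * y ^ (q + 1)) ≠ 0 := by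
  intro x y hx hy hxy
  have hq2 : 2 ≤ q := by
    subst hq
    calc 2 = 2 ^ 1 := by norm_num
    _ ≤ 2 ^ m := Nat.pow_le_pow_right (by norm_num) hm
  have hqq : q ≤ q ^ 2 := by nlinarith
  -- characteristic 2
  have h2 : (2 : K) = 0 := by
    have hc := FiniteField.cast_card_eq_zero K
    rw [hK, hq] at hc
    have : ((2 : K)) ^ (m * 3) = 0 := by
      have : (((2 ^ m) ^ 3 : ℕ) : K) = (2 : K) ^ (m * 3) := by push_cast [pow_mul]; ring
      rw [← this]; exact hc
    have h30 : m * 3 ≠ 0 := by omega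
    exact pow_eq_zero_iff h30 |>.mp this
  have e1 : q ^ 2 + 1 = q + (q ^ 2 - q + 1) := by omega
  have e2 : q ^ 2 + q = q + q ^ 2 := by omega
  have e3 : q + 1 = q + 1 := rfl
  set f := fun x : K => x ^ (q ^ 2 - q + 1) + A * x ^ (q ^ 2) + B * x with hf
  have key : y ^ q * (x ^ (q ^ 2 + 1) + A * x ^ (q ^ 2 + q) + B * x ^ (q + 1)) +
      x ^ q * (y ^ (q ^ 2 + 1) + A * y ^ (q ^ 2 + q) + B * y ^ (q + 1))
      = x ^ q * y ^ q * (f x + f y) := by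
    simp only [hf, e1, e2, pow_add, pow_one]
    ring
  rw [key]
  have hfxy : f x + f y ≠ 0 := by
    intro h
    apply hxy
    apply hPP.1
    linear_combination h - f y * h2
  exact mul_ne_zero (mul_ne_zero (pow_ne_zero _ hx) (pow_ne_zero _ hy)) hfxy
end

section
/- Let q = 2^m with m a positive integer and let K be a finite field with q^3 elements. Let A, B ∈ K be nonzero with A^q·B = 1 and A^(1+q+q^2) = 1. Then f_{A,B}(x) = x^(q^2−q+1) + A·x^(q^2) + B·x is not a bijection of K. -/
/-!
Since `A ^ (1 + q + q²) = 1`, Hilbert 90 in the cyclic group `Kˣ` of order `(q - 1)(1 + q + q²)`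
gives `β` with `β ^ (q - 1) = A`, and the substitution `x = y / β` turns `f_{A,B}` into a multiple
of `f_{1,1}`. Moreover `α ^ (q² + 1) f_{1,1}(α⁻¹) = α ^ q² + α ^ q + α` is the trace of `α` to
`𝔽_q`: additive because `q` is a power of the characteristic, with at most `q` values on the `q³`
elements of `K`, hence with a nonzero root `α`. So `α⁻¹ / β` and `0` are two roots of `f_{A,B}`.
-/

open Finset

theorem IsCyclic.exists_pow_eq_of_pow_eq_one {G : Type*} [CommGroup G] [IsCyclic G] [Finite G]
    {d e : ℕ} (hG : Nat.card G = d * e) {a : G} (ha : a ^ e = 1) : ∃ b : G, b ^ d = a := by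
  have hle : (powMonoidHom d : G →* G).range ≤ (powMonoidHom e).ker := by
    rintro _ ⟨b, rfl⟩
    simp [← pow_mul, ← hG, pow_card_eq_one']
  have hd : d ≠ 0 := by rintro rfl; exact Finite.card_pos.ne' (hG.trans (zero_mul e))
  have heq := Subgroup.eq_of_le_of_card_ge hle (by
    rw [IsCyclic.card_powMonoidHom_range, IsCyclic.card_powMonoidHom_ker, hG,
      Nat.gcd_eq_right (dvd_mul_right d e), Nat.mul_div_cancel_left _ (Nat.pos_of_ne_zero hd),
      Nat.gcd_eq_right (dvd_mul_left e d)])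
  exact (heq ▸ ha : a ∈ (powMonoidHom d : G →* G).range)

open Polynomial in
theorem card_filter_pow_eq_self_le {R : Type*} [CommRing R] [IsDomain R] [Fintype R]
    [DecidableEq R] {q : ℕ} (hq : 2 ≤ q) : #{x : R | x ^ q = x} ≤ q := by
  have hdeg : ((X : R[X]) ^ q - X).natDegree = q := by
    rw [natDegree_sub_eq_left_of_natDegree_lt] <;> simp only [natDegree_X_pow, natDegree_X]
    omega
  have hne : (X : R[X]) ^ q - X ≠ 0 := by
    intro h; rw [h, natDegree_zero] at hdeg; omega
  refine hdeg ▸ card_le_degree_of_subset_roots fun x hx => ?_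
  simp_all [mem_roots hne, sub_eq_zero]

theorem exists_ne_zero_pow_sq_add_pow_add_eq_zero {K : Type*} [Field K] [Fintype K] {p n : ℕ}
    [ExpChar K p] (hK : Fintype.card K = (p ^ n) ^ 3) :
    ∃ α : K, α ≠ 0 ∧ α ^ (p ^ n) ^ 2 + α ^ p ^ n + α = 0 := by
  classical
  set q := p ^ n
  have hq : 1 < q := by
    have := hK ▸ Fintype.one_lt_card (α := K)
    exact (one_lt_pow_iff three_ne_zero).mp this
  have frob_add (x y : K) : (x + y) ^ q = x ^ q + y ^ q := add_pow_expChar_pow ..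
  have frob_sub (x y : K) : (x - y) ^ q = x ^ q - y ^ q := sub_pow_expChar_pow ..
  set L : K → K := fun x => x ^ q ^ 2 + x ^ q + x
  have hL_sub (x y : K) : L (x - y) = L x - L y := by
    simp only [L, sq, pow_mul, frob_sub]; ring
  have hL_fixed (x : K) : L x ^ q = L x := by
    have hx : x ^ q ^ 3 = x := hK ▸ FiniteField.pow_card x
    simp only [L, frob_add, ← pow_mul]
    rw [← pow_succ, hx, ← sq]; ring
  have hcard : #{z : K | z ^ q = z} < #(univ : Finset K) :=
    calc #{z : K | z ^ q = z} ≤ q := card_filter_pow_eq_self_le hq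
      _ < q ^ 3 := lt_self_pow₀ hq (by norm_num)
      _ = #univ := by simp [hK]
  obtain ⟨x, -, y, -, hxy, hL⟩ := exists_ne_map_eq_of_card_lt_of_maps_to hcard
    (f := L) fun x _ => by simpa using hL_fixed x
  exact ⟨x - y, sub_ne_zero.mpr hxy, by rw [← sub_eq_zero.mpr hL, ← hL_sub]⟩

def trinomialMap {K : Type*} [Field K] (q : ℕ) (A B x : K) : K :=
  x ^ (q ^ 2 - q + 1) + A * x ^ q ^ 2 + B * x

theorem trinomialMap_zero {K : Type*} [Field K] {q : ℕ} (hq : q ≠ 0) (A B : K) :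
    trinomialMap q A B 0 = 0 := by
  simp [trinomialMap, hq]

theorem pow_sq_sub_add_one_eq {M : Type*} [Monoid M] (q : ℕ) (x : M) :
    x ^ (q ^ 2 - q + 1) = (x ^ (q - 1)) ^ q * x := by
  rw [← pow_mul, ← pow_succ, Nat.sub_one_mul, sq]

theorem pow_sq_eq {M : Type*} [Monoid M] {q : ℕ} (hq : 1 ≤ q) (x : M) :
    x ^ q ^ 2 = (x ^ (q - 1)) ^ (q + 1) * x := by
  obtain ⟨r, rfl⟩ : ∃ r, q = r + 1 := ⟨q - 1, by omega⟩
  rw [← pow_mul, ← pow_succ, Nat.add_sub_cancel]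
  ring_nf

theorem trinomialMap_div_eq {K : Type*} [Field K] {q : ℕ} (hq : 1 ≤ q) {A B β : K} (hβ0 : β ≠ 0)
    (hβ : β ^ (q - 1) = A) (hAB : A ^ q * B = 1) (y : K) :
    trinomialMap q A B (y / β) = trinomialMap q 1 1 y / (A ^ q * β) := by
  have hA : A ≠ 0 := by rintro rfl; simp [zero_pow (by omega : q ≠ 0)] at hAB
  have hB : B = (A ^ q)⁻¹ := eq_inv_of_mul_eq_one_right hAB
  simp only [trinomialMap, div_pow, pow_sq_sub_add_one_eq q β, pow_sq_eq hq β, hβ, hB]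
  field_simp
  ring

theorem trinomialMap_one_one_inv {K : Type*} [Field K] {q : ℕ} (hq : 1 ≤ q) {α : K} (hα0 : α ≠ 0)
    (hα : α ^ q ^ 2 + α ^ q + α = 0) : trinomialMap q 1 1 α⁻¹ = 0 := by
  have ha : α ^ (q - 1) ≠ 0 := pow_ne_zero _ hα0
  rw [pow_sq_eq hq, ← pow_sub_one_mul (by omega : q ≠ 0)] at hα
  simp only [trinomialMap, inv_pow, pow_sq_sub_add_one_eq q, pow_sq_eq hq]
  generalize α ^ (q - 1) = a at ha hα ⊢
  have h : a ^ (q + 1) + a + 1 = 0 :=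
    (mul_eq_zero.mp (by linear_combination hα : α * (a ^ (q + 1) + a + 1) = 0)).resolve_left hα0
  field_simp
  linear_combination a ^ q * h

theorem stmt_5_general (m : ℕ) (q : ℕ) (hq : q = 2 ^ m)
    (K : Type*) [Field K] [Fintype K] (hK : Fintype.card K = q ^ 3)
    (A B : K) (hA : A ≠ 0)
    (h1 : A ^ q * B = 1) (h2 : A ^ (1 + q + q ^ 2) = 1) :
    ¬ Function.Bijective (fun x : K => x ^ (q ^ 2 - q + 1) + A * x ^ (q ^ 2) + B * x) := by
  subst hq
  have hq1 : 1 ≤ 2 ^ m := Nat.one_le_two_pow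
  have : CharP K 2 := charP_of_card_eq_prime_pow (hK.trans (pow_mul 2 m 3).symm)
  have hcard : Nat.card Kˣ = (2 ^ m - 1) * (1 + 2 ^ m + (2 ^ m) ^ 2) := by
    rw [Nat.card_units, Nat.card_eq_fintype_card, hK]
    zify [hq1, Nat.one_le_pow 3 _ hq1]
    ring
  obtain ⟨α, hα0, hα⟩ := exists_ne_zero_pow_sq_add_pow_add_eq_zero (p := 2) hK
  obtain ⟨β, hβ⟩ := IsCyclic.exists_pow_eq_of_pow_eq_one hcard (a := Units.mk0 A hA)
    (Units.ext (by simpa using h2))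
  have hroot : trinomialMap (2 ^ m) A B (α⁻¹ / β) = trinomialMap (2 ^ m) A B 0 := by
    rw [trinomialMap_div_eq hq1 β.ne_zero (by simpa using congrArg Units.val hβ) h1,
      trinomialMap_one_one_inv hq1 hα0 hα, trinomialMap_zero (by positivity), zero_div]
  exact fun hf => div_ne_zero (inv_ne_zero hα0) β.ne_zero (hf.injective hroot)

theorem stmt_5 (m : ℕ) (hm : 1 ≤ m) (q : ℕ) (hq : q = 2 ^ m)
    (K : Type*) [Field K] [Fintype K] (hK : Fintype.card K = q ^ 3)
    (A B : K) (hA : A ≠ 0) (hB : B ≠ 0)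
    (h1 : A ^ q * B = 1) (h2 : A ^ (1 + q + q ^ 2) = 1) :
    ¬ Function.Bijective (fun x : K => x ^ (q ^ 2 - q + 1) + A * x ^ (q ^ 2) + B * x) :=
  stmt_5_general m q hq K hK A B hA h1 h2
end

section
/- Let q = 2^m with m a positive integer and let K be a finite field with q^3 elements. Let A, B ∈ K be nonzero with A^q·B = 1 and A^(1+q+q^2) ≠ 1. Then f_{A,B}(x) = x^(q^2−q+1) + A·x^(q^2) + B·x is a bijection of K. -/
set_option maxHeartbeats 1000000 in
theorem stmt_7 (m : ℕ) (hm : 1 ≤ m) (q : ℕ) (hq : q = 2 ^ m)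
    (K : Type*) [Field K] [Fintype K] (hK : Fintype.card K = q ^ 3)
    (A B : K) (hA : A ≠ 0) (hB : B ≠ 0)
    (h1 : A ^ q * B = 1) (h2 : A ^ (1 + q + q ^ 2) ≠ 1) :
    Function.Bijective (fun x : K => x ^ (q ^ 2 - q + 1) + A * x ^ (q ^ 2) + B * x) := by
  have hq0 : q ≠ 0 := by rw [hq]; positivity
  have hchar : CharP K 2 := by
    have hcard : Fintype.card K = 2 ^ (3 * m) := by rw [hK, hq, ← pow_mul, mul_comm]
    have h0 : (((2:ℕ) ^ (3*m) : ℕ) : K) = 0 := by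
      rw [← hcard]; exact FiniteField.cast_card_eq_zero K
    haveI := ringChar.charP K
    have hpp : (ringChar K).Prime := CharP.char_is_prime K (ringChar K)
    have hdvd : ringChar K ∣ 2 ^ (3*m) := (CharP.cast_eq_zero_iff K (ringChar K) _).mp h0
    have h2' : ringChar K = 2 :=
      (Nat.prime_dvd_prime_iff_eq hpp Nat.prime_two).mp (hpp.dvd_of_dvd_pow hdvd)
    rw [← h2']; exact ringChar.charP K
  haveI := hchar
  haveI : Fact (Nat.Prime 2) := ⟨Nat.prime_two⟩
  have two0 : (2 : K) = 0 := CharP.cast_eq_zero K 2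
  have frobq : ∀ x y : K, (x + y) ^ q = x ^ q + y ^ q := by
    intro x y; rw [hq]; exact add_pow_char_pow x y 2 m
  have hq3 : ∀ x : K, x ^ (q ^ 3) = x := by
    intro x; rw [← hK]; exact FiniteField.pow_card x
  have hqq : q * q = q ^ 2 := by ring
  have hq2q : q ^ 2 * q = q ^ 3 := by ring
  have hqle : q ≤ q ^ 2 := Nat.le_self_pow (by norm_num) q
  have frobq2 : ∀ x y : K, (x + y) ^ (q^2) = x ^ (q^2) + y ^ (q^2) := by
    intro x y
    rw [← hqq, pow_mul, pow_mul, pow_mul, frobq, frobq]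
  -- norm of A is not 1
  have hNne : A * A^q * A^(q^2) ≠ 1 := by
    intro h; apply h2; rw [pow_add, pow_add, pow_one]; rw [mul_assoc] at h ⊢; exact h
  have hNsub : A * A^q * A^(q^2) - 1 ≠ 0 := sub_ne_zero.mpr hNne
  have hN0 : A * A^q * A^(q^2) ≠ 0 :=
    mul_ne_zero (mul_ne_zero hA (pow_ne_zero _ hA)) (pow_ne_zero _ hA)
  -- B-conjugate relations
  have hb1 : A^q * B = 1 := h1
  have hb2 : A^(q^2) * B^q = 1 := by
    have h := congrArg (fun t : K => t ^ q) h1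
    simp only [mul_pow, ← pow_mul, one_pow] at h
    rw [hqq] at h; exact h
  have hb3 : A * B^(q^2) = 1 := by
    have h := congrArg (fun t : K => t ^ q) hb2
    simp only [mul_pow, ← pow_mul, one_pow] at h
    rw [hqq, hq2q] at h
    rw [hq3] at h; exact h
  -- squaring is injective and surjective
  have sqinj : ∀ x y : K, x^2 = y^2 → x = y := by
    intro x y h
    have hz : (x - y)^2 = 0 := by linear_combination h + (y^2 - x*y) * two0
    have := pow_eq_zero_iff (n := 2) (by norm_num) |>.mp hz
    exact sub_eq_zero.mp this
  have sqsurj : ∀ x : K, ∃ y : K, y^2 = x := by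
    have hinj : Function.Injective (fun t : K => t^2) := fun a b hab => sqinj a b hab
    intro x
    obtain ⟨y, hy⟩ := Finite.surjective_of_injective hinj x
    exact ⟨y, hy⟩
  -- Kernel lemma 1 : A z + z^q + B z^{q^2} has trivial kernel (B-free form)
  have K1 : ∀ z : K, A*A^q*z + A^q*z^q + z^(q^2) = 0 → z = 0 := by
    intro z hz
    have hz2 : A^q*A^(q^2)*z^q + A^(q^2)*z^(q^2) + z = 0 := by
      have h := congrArg (fun t : K => t ^ q) hz
      simp only [mul_pow, frobq, ← pow_mul, zero_pow hq0] at h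
      rw [hqq, hq2q] at h; simp only [hq3] at h
      linear_combination h
    have hdet : z * (A*A^q*A^(q^2) - 1)^2 = 0 := by
      linear_combination (A*A^q*A^(q^2)*A^(q^2) - A^(q^2)) * hz + (1 - A*A^q*A^(q^2)) * hz2
    rcases mul_eq_zero.mp hdet with h | h
    · exact h
    · exact absurd (pow_eq_zero_iff (n := 2) (by norm_num) |>.mp h) hNsub
  -- Kernel lemma 2 : coefficient N on z^{q^2}
  have K2 : ∀ z : K, A*A^q*z + A^q*z^q + (A*A^q*A^(q^2))*z^(q^2) = 0 → z = 0 := by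
    intro z hz
    have hz2 : A^q*A^(q^2)*z^q + A^(q^2)*z^(q^2) + (A*A^q*A^(q^2))*z = 0 := by
      have h := congrArg (fun t : K => t ^ q) hz
      simp only [mul_pow, frobq, ← pow_mul, zero_pow hq0] at h
      rw [hqq, hq2q] at h; simp only [hq3] at h
      linear_combination h
    have hz3 : A^(q^2)*A*z^(q^2) + A*z + (A*A^q*A^(q^2))*z^q = 0 := by
      have h := congrArg (fun t : K => t ^ q) hz2
      simp only [mul_pow, frobq, ← pow_mul, zero_pow hq0] at h
      rw [hqq, hq2q] at h; simp only [hq3] at h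
      linear_combination h
    have hdet : z * ((A*A^q*A^(q^2)) * (A*A^q*A^(q^2) - 1)^2) = 0 := by
      linear_combination ((A*A^q*A^(q^2))^2 - A*A^q*A^(q^2)) * hz2
        + A^q*A^(q^2)*(1 - A*A^q*A^(q^2)) * hz3
    rcases mul_eq_zero.mp hdet with h | h
    · exact h
    · rcases mul_eq_zero.mp h with h' | h'
      · exact absurd h' hN0
      · exact absurd (pow_eq_zero_iff (n := 2) (by norm_num) |>.mp h') hNsub
  -- Kernel lemma 3 : coefficients N on z^q and z^{q^2}
  have K3 : ∀ z : K, A*A^q*z + (A*A^q*A^(q^2))*A^q*z^q + (A*A^q*A^(q^2))*z^(q^2) = 0 → z = 0 := by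
    intro z hz
    have hz2 : A^q*A^(q^2)*z^q + (A*A^q*A^(q^2))*A^(q^2)*z^(q^2) + (A*A^q*A^(q^2))*z = 0 := by
      have h := congrArg (fun t : K => t ^ q) hz
      simp only [mul_pow, frobq, ← pow_mul, zero_pow hq0] at h
      rw [hqq, hq2q] at h; simp only [hq3] at h
      linear_combination h
    have hz3 : A^(q^2)*A*z^(q^2) + (A*A^q*A^(q^2))*A*z + (A*A^q*A^(q^2))*z^q = 0 := by
      have h := congrArg (fun t : K => t ^ q) hz2
      simp only [mul_pow, frobq, ← pow_mul, zero_pow hq0] at h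
      rw [hqq, hq2q] at h; simp only [hq3] at h
      linear_combination h
    have hdet : z * ((A*A^q*A^(q^2))^2 * (A*A^q*A^(q^2) - 1)^2) = 0 := by
      linear_combination (A*A^q*A^(q^2))*A^(q^2)*(1 - A*A^q*A^(q^2)) * hz
        + (A*A^q*A^(q^2))*A^q*A^(q^2)*(A*A^q*A^(q^2) - 1) * hz3
    rcases mul_eq_zero.mp hdet with h | h
    · exact h
    · rcases mul_eq_zero.mp h with h' | h'
      · exact absurd (pow_eq_zero_iff (n := 2) (by norm_num) |>.mp h') hN0
      · exact absurd (pow_eq_zero_iff (n := 2) (by norm_num) |>.mp h') hNsub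
  -- Main lemma: the map z ↦ z^q (A z + z^q + B z^{q^2}) is injective
  have hstar : ∀ z w : K,
      z^q*(A*z + z^q + B*z^(q^2)) = w^q*(A*w + w^q + B*w^(q^2)) → z = w := by
    intro z w hQ
    by_contra hne
    set s := z - w with hs
    have hsne : s ≠ 0 := sub_ne_zero.mpr hne
    have hz : z = w + s := by rw [hs]; ring
    have hzq : z^q = w^q + s^q := by rw [hz]; exact frobq w s
    have hzq2 : z^(q^2) = w^(q^2) + s^(q^2) := by rw [hz]; exact frobq2 w s
    rw [hzq, hzq2, hz] at hQ
    have hE1 : w^q*(A*s + s^q + B*s^(q^2)) + s^q*(A*w + w^q + B*w^(q^2))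
        + s^q*(A*s + s^q + B*s^(q^2)) = 0 := by linear_combination hQ
    have hE2 : w^(q^2)*(A^q*s^q + s^(q^2) + B^q*s) + s^(q^2)*(A^q*w^q + w^(q^2) + B^q*w)
        + s^(q^2)*(A^q*s^q + s^(q^2) + B^q*s) = 0 := by
      have h := congrArg (fun t : K => t ^ q) hE1
      simp only [mul_pow, frobq, ← pow_mul, zero_pow hq0] at h
      rw [hqq, hq2q] at h; simp only [hq3] at h
      linear_combination h
    have hE3 : w*(A^(q^2)*s^(q^2) + s + B^(q^2)*s^q) + s*(A^(q^2)*w^(q^2) + w + B^(q^2)*w^q)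
        + s*(A^(q^2)*s^(q^2) + s + B^(q^2)*s^q) = 0 := by
      have h := congrArg (fun t : K => t ^ q) hE2
      simp only [mul_pow, frobq, ← pow_mul, zero_pow hq0] at h
      rw [hqq, hq2q] at h; simp only [hq3] at h
      linear_combination h
    have e1 : A*A^q*(w*s^q + w^q*s) + (w^q*s^(q^2) + w^(q^2)*s^q)
        = A*A^q*(s*s^q) + A^q*(s^q)^2 + s^q*s^(q^2) := by
      linear_combination A^q*hE1 - ((s^(q^2))*(w^q) + (s^q)*(w^(q^2)) + (s^q)*(s^(q^2)))*hb1
        - ((s^q)*(s^(q^2)) + (A^q)*(s^q)*(w^q) + (A^q)*(s^q)^2 + A*(A^q)*s*(s^q))*two0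
    have e2 : A^q*A^(q^2)*(w^q*s^(q^2) + w^(q^2)*s^q) + (w^(q^2)*s + w*s^(q^2))
        = A^q*A^(q^2)*(s^q*s^(q^2)) + A^(q^2)*(s^(q^2))^2 + s^(q^2)*s := by
      linear_combination A^(q^2)*hE2 - ((s^(q^2))*w + s*(w^(q^2)) + s*(s^(q^2)))*hb2
        - (s*(s^(q^2)) + (A^(q^2))*(s^(q^2))*(w^(q^2)) + (A^(q^2))*(s^(q^2))^2
           + (A^q)*(A^(q^2))*(s^q)*(s^(q^2)))*two0
    have e3 : A^(q^2)*A*(w^(q^2)*s + w*s^(q^2)) + (w*s^q + w^q*s)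
        = A^(q^2)*A*(s^(q^2)*s) + A*s^2 + s*s^q := by
      linear_combination A*hE3 - ((s^q)*w + s*(w^q) + s*(s^q))*hb3
        - (s*(s^q) + A*s*w + A*s^2 + A*(A^(q^2))*s*(s^(q^2)))*two0
    have e4 : s^(q^2)*(w*s^q + w^q*s) + s*(w^q*s^(q^2) + w^(q^2)*s^q)
        + s^q*(w^(q^2)*s + w*s^(q^2)) = 0 := by
      linear_combination ((s^q)*(s^(q^2))*w + s*(s^(q^2))*(w^q) + s*(s^q)*(w^(q^2)))*two0
    -- the determinant identity: product of three linearized forms vanishes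
    have hLMP : (A*A^q*s + A^q*s^q + s^(q^2))
        * (A*A^q*s + A^q*s^q + (A*A^q*A^(q^2))*s^(q^2))
        * (A*A^q*s + (A*A^q*A^(q^2))*A^q*s^q + (A*A^q*A^(q^2))*s^(q^2)) = 0 := by
      linear_combination
        (A*(A^q)^2*s + A*(A^q)^3*(A^(q^2))*(s^q) + A^2*(A^q)^3*(A^(q^2))^2*(s^(q^2))
          + 2*A^3*(A^q)^4*(A^(q^2))^2*s + 2*A^3*(A^q)^5*(A^(q^2))^3*(s^q)) * e1
        + (A*(A^q)^2*(s^q) + A^2*(A^q)^2*(A^(q^2))*(s^(q^2)) + A^3*(A^q)^3*(A^(q^2))*s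
          + 2*A^3*(A^q)^4*(A^(q^2))^2*(s^q)) * e2
        + (A*(A^q)^2*(s^(q^2)) + A^2*(A^q)^3*s + A^2*(A^q)^4*(A^(q^2))*(s^q)) * e3
        + (A*(A^q)^2 + A^3*(A^q)^4*(A^(q^2))^2) * e4
        + (-2*A*(A^q)^2*(s^q)*(s^(q^2))*w - 2*A*(A^q)^2*s*(s^(q^2))*(w^q)
          - 2*A*(A^q)^2*s*(s^q)*(w^(q^2)) + 2*A*(A^q)^2*s*(s^q)*(s^(q^2))
          + A*(A^q)^2*(A^(q^2))*(s^q)*(s^(q^2))^2 + A*(A^q)^3*s*(s^q)^2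
          - A*(A^q)^3*(A^(q^2))*(s^q)*(s^(q^2))*(w^q) - A*(A^q)^3*(A^(q^2))*(s^q)^2*(w^(q^2))
          + 2*A*(A^q)^3*(A^(q^2))*(s^q)^2*(s^(q^2)) + A*(A^q)^4*(A^(q^2))*(s^q)^3
          + A^2*(A^q)^2*s^2*(s^(q^2)) - A^2*(A^q)^2*(A^(q^2))*(s^(q^2))^2*w
          - A^2*(A^q)^2*(A^(q^2))*s*(s^(q^2))*(w^(q^2)) + 2*A^2*(A^q)^2*(A^(q^2))*s*(s^(q^2))^2
          + A^2*(A^q)^2*(A^(q^2))^2*(s^(q^2))^3 - A^2*(A^q)^3*s*(s^q)*w - A^2*(A^q)^3*s^2*(w^q)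
          + 2*A^2*(A^q)^3*s^2*(s^q) + 2*A^2*(A^q)^3*(A^(q^2))*s*(s^q)*(s^(q^2))
          - A^2*(A^q)^3*(A^(q^2))^2*(s^(q^2))^2*(w^q)
          - A^2*(A^q)^3*(A^(q^2))^2*(s^q)*(s^(q^2))*(w^(q^2))
          + 2*A^2*(A^q)^3*(A^(q^2))^2*(s^q)*(s^(q^2))^2 - A^2*(A^q)^4*(A^(q^2))*(s^q)^2*w
          - A^2*(A^q)^4*(A^(q^2))*s*(s^q)*(w^q) + 2*A^2*(A^q)^4*(A^(q^2))*s*(s^q)^2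
          + A^2*(A^q)^4*(A^(q^2))^2*(s^q)^2*(s^(q^2)) + A^3*(A^q)^3*s^3
          - A^3*(A^q)^3*(A^(q^2))*s*(s^(q^2))*w - A^3*(A^q)^3*(A^(q^2))*s^2*(w^(q^2))
          + 2*A^3*(A^q)^3*(A^(q^2))*s^2*(s^(q^2)) + A^3*(A^q)^3*(A^(q^2))^2*s*(s^(q^2))^2
          + A^3*(A^q)^4*(A^(q^2))*s^2*(s^q) - 3*A^3*(A^q)^4*(A^(q^2))^2*(s^q)*(s^(q^2))*w
          - 3*A^3*(A^q)^4*(A^(q^2))^2*s*(s^(q^2))*(w^q)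
          - 4*A^3*(A^q)^4*(A^(q^2))^2*s*(s^q)*(w^(q^2))
          + 4*A^3*(A^q)^4*(A^(q^2))^2*s*(s^q)*(s^(q^2))
          + A^3*(A^q)^4*(A^(q^2))^3*(s^q)*(s^(q^2))^2 + A^3*(A^q)^5*(A^(q^2))^2*s*(s^q)^2
          - 2*A^3*(A^q)^5*(A^(q^2))^3*(s^q)*(s^(q^2))*(w^q)
          - 2*A^3*(A^q)^5*(A^(q^2))^3*(s^q)^2*(w^(q^2))
          + 2*A^3*(A^q)^5*(A^(q^2))^3*(s^q)^2*(s^(q^2)) + A^3*(A^q)^6*(A^(q^2))^3*(s^q)^3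
          - A^4*(A^q)^5*(A^(q^2))^2*s*(s^q)*w - A^4*(A^q)^5*(A^(q^2))^2*s^2*(w^q)
          + A^4*(A^q)^5*(A^(q^2))^2*s^2*(s^q) - A^4*(A^q)^6*(A^(q^2))^3*(s^q)^2*w
          - A^4*(A^q)^6*(A^(q^2))^3*s*(s^q)*(w^q) + A^4*(A^q)^6*(A^(q^2))^3*s*(s^q)^2)*two0
    rcases mul_eq_zero.mp hLMP with h | h
    · rcases mul_eq_zero.mp h with h' | h'
      · exact hsne (K1 s h')
      · exact hsne (K2 s h')
    · exact hsne (K3 s h)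
  -- key multiplied identity
  have key : ∀ x : K, (x ^ (q ^ 2 - q + 1) + A * x ^ (q ^ 2) + B * x) * x^q
      = x^(q^2+1) + A*x^(q^2+q) + B*x^(q+1) := by
    intro x
    have hsp : x^(q^2+1) = x^(q^2-q+1) * x^q := by
      rw [← pow_add]; congr 1; omega
    linear_combination -hsp
  -- relation between the multiplied form and the Qhat form at the inverse
  have hgQ : ∀ x : K, x ≠ 0 →
      x^(q^2+2*q+1) * ((x⁻¹)^q*(A*x⁻¹ + (x⁻¹)^q + B*(x⁻¹)^(q^2)))
      = x^(q^2+1) + A*x^(q^2+q) + B*x^(q+1) := by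
    intro x hx
    have hxi : x * x⁻¹ = 1 := mul_inv_cancel₀ hx
    have i1 : (x*x⁻¹)^(q+1) = 1 := by rw [hxi, one_pow]
    have i2 : (x*x⁻¹)^(2*q) = 1 := by rw [hxi, one_pow]
    have i3 : (x*x⁻¹)^(q^2+q) = 1 := by rw [hxi, one_pow]
    linear_combination A*x^(q^2+q)*i1 + x^(q^2+1)*i2 + B*x^(q+1)*i3
  -- zero is the only root
  have hF0 : ∀ x : K, x ^ (q ^ 2 - q + 1) + A * x ^ (q ^ 2) + B * x = 0 → x = 0 := by
    intro x hx0
    by_contra hxne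
    have hk := key x
    rw [hx0, zero_mul] at hk
    have hg := hgQ x hxne
    rw [← hk] at hg
    have hQ0 : (x⁻¹)^q*(A*x⁻¹ + (x⁻¹)^q + B*(x⁻¹)^(q^2)) = 0 := by
      rcases mul_eq_zero.mp hg with h | h
      · exact absurd h (pow_ne_zero _ hxne)
      · exact h
    have h00 : (0:K)^q*(A*0 + (0:K)^q + B*(0:K)^(q^2)) = 0 := by
      rw [zero_pow hq0]; ring
    have := hstar x⁻¹ 0 (by rw [hQ0, h00])
    exact inv_ne_zero hxne this
  -- injectivity
  have hinj : Function.Injective (fun x : K => x ^ (q ^ 2 - q + 1) + A * x ^ (q ^ 2) + B * x) := by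
    intro x y hxy
    simp only at hxy
    rcases eq_or_ne x 0 with rfl | hx
    · have h0 : (0:K) ^ (q ^ 2 - q + 1) + A * (0:K) ^ (q ^ 2) + B * 0 = 0 := by
        rw [zero_pow (by omega), zero_pow (by positivity)]; ring
      rw [h0] at hxy
      exact (hF0 y hxy.symm).symm
    rcases eq_or_ne y 0 with rfl | hy
    · have h0 : (0:K) ^ (q ^ 2 - q + 1) + A * (0:K) ^ (q ^ 2) + B * 0 = 0 := by
        rw [zero_pow (by omega), zero_pow (by positivity)]; ring
      rw [h0] at hxy
      exact hF0 x hxy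
    have hFx : x ^ (q ^ 2 - q + 1) + A * x ^ (q ^ 2) + B * x ≠ 0 := fun h => hx (hF0 x h)
    -- cross identity for the multiplied forms
    have hgg : (x^(q^2+1) + A*x^(q^2+q) + B*x^(q+1)) * y^q
        = (y^(q^2+1) + A*y^(q^2+q) + B*y^(q+1)) * x^q := by
      have kx := key x
      have ky := key y
      rw [hxy] at kx
      linear_combination (-(y^q))*kx + x^q*ky
    -- construct the square root μ
    obtain ⟨μ, hμ⟩ := sqsurj (y^(q^2+q+1) * (x^(q^2+q+1))⁻¹)
    have hxE : x^(q^2+q+1) ≠ 0 := pow_ne_zero _ hx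
    have hyE : y^(q^2+q+1) ≠ 0 := pow_ne_zero _ hy
    have hμx : μ^2 * x^(q^2+q+1) = y^(q^2+q+1) := by
      rw [hμ]; field_simp
    have hμne : μ ≠ 0 := by
      intro h; rw [h] at hμx; simp at hμx
      exact hy (pow_eq_zero_iff (by positivity) |>.mp hμx.symm)
    have hcx : x^((q^2+q+1)*q) = x * x^(q^2) * x^q := by
      rw [show (q^2+q+1)*q = q^3 + q^2 + q by ring, pow_add, pow_add, hq3]
    have hcy : y^((q^2+q+1)*q) = y * y^(q^2) * y^q := by
      rw [show (q^2+q+1)*q = q^3 + q^2 + q by ring, pow_add, pow_add, hq3]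
    have hμxq : (μ^q)^2 * x^(q^2+q+1) = y^(q^2+q+1) := by
      have h := congrArg (fun t : K => t ^ q) hμx
      simp only [mul_pow, ← pow_mul] at h
      rw [hcx, hcy] at h
      have hμswap : μ^(2*q) = (μ^q)^2 := by rw [mul_comm, pow_mul]
      rw [hμswap] at h
      linear_combination h
    have hμq : μ^q = μ := by
      apply sqinj
      exact mul_right_cancel₀ hxE (hμxq.trans hμx.symm)
    have hμq2 : μ^(q^2) = μ := by
      rw [← hqq, pow_mul, hμq, hμq]
    -- main chain : Qhat x⁻¹ = Qhat (μ y⁻¹)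
    have hmain : (x^(q^2+1) + A*x^(q^2+q) + B*x^(q+1)) * y^(q^2+2*q+1)
        = μ^2 * (y^(q^2+1) + A*y^(q^2+q) + B*y^(q+1)) * x^(q^2+2*q+1) := by
      linear_combination y^(q^2+q+1)*hgg
        - (y^(q^2+1) + A*y^(q^2+q) + B*y^(q+1))*x^q*hμx
    have hgx := hgQ x hx
    have hgy := hgQ y hy
    have hc : ((x⁻¹)^q*(A*x⁻¹ + (x⁻¹)^q + B*(x⁻¹)^(q^2))) * (x^(q^2+2*q+1) * y^(q^2+2*q+1))
        = (μ^2 * ((y⁻¹)^q*(A*y⁻¹ + (y⁻¹)^q + B*(y⁻¹)^(q^2)))) * (x^(q^2+2*q+1) * y^(q^2+2*q+1)) := by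
      linear_combination hmain + y^(q^2+2*q+1)*hgx - μ^2*x^(q^2+2*q+1)*hgy
    have hcan := mul_right_cancel₀
      (mul_ne_zero (pow_ne_zero _ hx) (pow_ne_zero _ hy)) hc
    have hQμ : (μ*y⁻¹)^q*(A*(μ*y⁻¹) + (μ*y⁻¹)^q + B*(μ*y⁻¹)^(q^2))
        = μ^2 * ((y⁻¹)^q*(A*y⁻¹ + (y⁻¹)^q + B*(y⁻¹)^(q^2))) := by
      rw [mul_pow, mul_pow, hμq, hμq2]; ring
    have huv := hstar x⁻¹ (μ*y⁻¹) (by rw [hcan, hQμ])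
    -- y = μ x
    have hyx : y = μ * x := by
      have h := huv
      rw [inv_eq_iff_eq_inv, mul_inv_rev, inv_inv] at h
      rw [h]
      field_simp
    -- conclude
    have hμE : μ^(q^2-q+1) = μ := by
      have hp1 : μ^(q^2-q+1) * μ^q = μ^(q^2+1) := by rw [← pow_add]; congr 1; omega
      have hp2 : μ^(q^2+1) = μ * μ := by rw [pow_add, hμq2, pow_one]
      rw [hμq, hp2] at hp1
      exact mul_right_cancel₀ hμne hp1
    have hFy : y ^ (q^2-q+1) + A*y^(q^2) + B*y
        = μ * (x ^ (q^2-q+1) + A*x^(q^2) + B*x) := by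
      rw [hyx, mul_pow, mul_pow, hμE, hμq2]; ring
    rw [hFy] at hxy
    have hμ1 : μ = 1 := by
      have : (μ - 1) * (x ^ (q ^ 2 - q + 1) + A * x ^ (q ^ 2) + B * x) = 0 := by
        linear_combination -hxy
      rcases mul_eq_zero.mp this with h | h
      · exact sub_eq_zero.mp h
      · exact absurd h hFx
    rw [hμ1, one_mul] at hyx
    exact hyx.symm
  exact Finite.injective_iff_bijective.mp hinj
end

section
/- Let q = 2^m with m a positive integer and let K be a finite field with q^3 elements. Let A, B ∈ K be nonzero with A^q·B = 1. Then f_{A,B}(x) = x^(q^2−q+1) + A·x^(q^2) + B·x is a bijection of K if and only if B^(1+q+q^2) ≠ 1. -/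
open Polynomial

section AuxAlg
variable {K : Type*} [Field K]

private lemma char2_eq (h2 : (2:K) = 0) {a b : K} (h : a + b = 0) : a = b := by
  linear_combination h - b * h2

private lemma quadlem (h2 : (2:K) = 0) (s u v P0 P1 n : K)
    (hN : s*u*v = n)
    (hE0 : P0*(s*u+u+1) = s*(u*v+v+1))
    (hE1 : P1*(u*v+v+1) = u*(v*s+s+1))
    (hn1 : n ≠ 1) (hu : u ≠ 0) :
    (P0+P0^2+P0^2*P1)*u^2 + (n+P0+P0*n+P0*P1+P0^2+P0^2*P1)*u + (n+P0*n+P0*P1) = 0 := by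
  have hG : s*u*(P0*u+1) = P0*u^2+P0*u+n*u+n := by
    linear_combination u*hE0 + (u+1)*hN + (s*u - P0*u - P0*u^2)*h2
  have hE1p : P1*(n*u+n+s*u) = n*(s*u)+(s*u)^2+(s*u)*u := by
    linear_combination (s*u)*hE1 + (P1*u+P1+s*u)*hN
      + (P1*n + u*P1*n - s*u*v*P1 - s*u^2*v*P1)*h2
  have hGsq : (s*u*(P0*u+1))^2 = (P0*u^2+P0*u+n*u+n)^2 := by rw [hG]
  have key : (1+n)*(u*((P0+P0^2+P0^2*P1)*u^2 + (n+P0+P0*n+P0*P1+P0^2+P0^2*P1)*u + (n+P0*n+P0*P1))) = 0 := by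
    linear_combination (P0*u+1)^2*hE1p + ((P1+n+u)*(P0*u+1))*hG + hGsq
      + (n^2 + u*n + 2*u*n^2 + 2*u*P0*n + u*P0*n^2 + u*P0*P1 + u^2*n + u^2*n^2 + u^2*P0
        + 4*u^2*P0*n + u^2*P0*n^2 + u^2*P0*P1 + u^2*P0^2 + u^2*P0^2*n + u^2*P0^2*P1
        + u^3*P0 + 2*u^3*P0*n + 2*u^3*P0^2 + u^3*P0^2*n + u^3*P0^2*P1 + u^4*P0^2
        - s*u*P1 - 2*s*u^2*P0*P1 - s*u^3*P0^2*P1)*h2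
  have h1n : (1+n) ≠ 0 := by
    intro h
    exact hn1 (char2_eq h2 (by linear_combination h)).symm
  rcases mul_eq_zero.mp key with h | h
  · exact absurd h h1n
  rcases mul_eq_zero.mp h with h | h
  · exact absurd h hu
  · exact h

private lemma vieta {a b c z z' : K} (hz : a*z^2+b*z+c = 0) (hz' : a*z'^2+b*z'+c = 0)
    (hne : z ≠ z') : a*(z*z') = c := by
  have hd : z - z' ≠ 0 := sub_ne_zero.mpr hne
  have h1 : (z-z')*(a*(z+z')+b) = 0 := by linear_combination hz - hz'
  have h2 : a*(z+z')+b = 0 := by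
    rcases mul_eq_zero.mp h1 with h | h
    · exact absurd h hd
    · exact h
  have h3 : (z-z')*(a*(z*z') - c) = 0 := by linear_combination z'*hz - z*hz'
  rcases mul_eq_zero.mp h3 with h | h
  · exact absurd h hd
  · linear_combination h

private lemma degcase (h2 : (2:K) = 0) {n P0 P1 u : K} (hn1 : n ≠ 1) (hP1 : P1 ≠ 0)
    (hQ : (P0+P0^2+P0^2*P1)*u^2 + (n+P0+P0*n+P0*P1+P0^2+P0^2*P1)*u + (n+P0*n+P0*P1) = 0)
    (hd0 : 1+P0+P0*P1 = 0) : u = 1 := by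
  have key : (1+n)*((1+P0)*(u+1)) = 0 := by
    linear_combination hQ + (P0*u^2+(1+P0)*u+1)*hd0
      + (-(P0*P1) - u*P0 - u*P0*P1 - u*P0^2 - u*P0^2*P1 - u^2*P0 - u^2*P0^2 - u^2*P0^2*P1)*h2
  have h1n : (1+n) ≠ 0 := by
    intro h; exact hn1 (char2_eq h2 (by linear_combination h)).symm
  rcases mul_eq_zero.mp key with h | h
  · exact absurd h h1n
  rcases mul_eq_zero.mp h with h | h
  · exfalso
    have hP0 : P0 = 1 := (char2_eq h2 (by linear_combination h)).symm
    apply hP1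
    rw [hP0] at hd0
    linear_combination hd0 - h2
  · exact char2_eq h2 (by linear_combination h)

private lemma corelem (h2 : (2:K) = 0) (n P0 P1 P2 s u v s' u' v' : K)
    (hn0 : n ≠ 0) (hn1 : n ≠ 1)
    (hP0 : P0 ≠ 0) (hP1 : P1 ≠ 0) (hP2 : P2 ≠ 0)
    (hPn : P0*P1*P2 = n)
    (hN : s*u*v = n) (hN' : s'*u'*v' = n)
    (hE0 : P0*(s*u+u+1) = s*(u*v+v+1))
    (hE1 : P1*(u*v+v+1) = u*(v*s+s+1))
    (hE2 : P2*(v*s+s+1) = v*(s*u+u+1))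
    (hE0' : P0*(s'*u'+u'+1) = s'*(u'*v'+v'+1))
    (hE1' : P1*(u'*v'+v'+1) = u'*(v'*s'+s'+1))
    (hE2' : P2*(v'*s'+s'+1) = v'*(s'*u'+u'+1))
    (hsne : s ≠ s') (hune : u ≠ u') (hvne : v ≠ v')
    (hu : u ≠ 0) (hv : v ≠ 0) (hs : s ≠ 0)
    (hu' : u' ≠ 0) (hv' : v' ≠ 0) (hs' : s' ≠ 0) : False := by
  have Qu  := quadlem h2 s u v P0 P1 n hN hE0 hE1 hn1 hu
  have Qu' := quadlem h2 s' u' v' P0 P1 n hN' hE0' hE1' hn1 hu'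
  have Qv  := quadlem h2 u v s P1 P2 n (by linear_combination hN) hE1 hE2 hn1 hv
  have Qv' := quadlem h2 u' v' s' P1 P2 n (by linear_combination hN') hE1' hE2' hn1 hv'
  have Qs  := quadlem h2 v s u P2 P0 n (by linear_combination hN) hE2 hE0 hn1 hs
  have Qs' := quadlem h2 v' s' u' P2 P0 n (by linear_combination hN') hE2' hE0' hn1 hs'
  have hd0 : 1+P0+P0*P1 ≠ 0 := fun h =>
    hune ((degcase h2 hn1 hP1 Qu h).trans (degcase h2 hn1 hP1 Qu' h).symm)
  have hd1 : 1+P1+P1*P2 ≠ 0 := fun h =>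
    hvne ((degcase h2 hn1 hP2 Qv h).trans (degcase h2 hn1 hP2 Qv' h).symm)
  have hd2 : 1+P2+P2*P0 ≠ 0 := fun h =>
    hsne ((degcase h2 hn1 hP0 Qs h).trans (degcase h2 hn1 hP0 Qs' h).symm)
  have vU := vieta Qu Qu' hune
  have vV := vieta Qv Qv' hvne
  have vS := vieta Qs Qs' hsne
  set L3 := P0+P0^2+P0^2*P1 with hL3
  set M3 := P1+P1^2+P1^2*P2 with hM3
  set K3 := P2+P2^2+P2^2*P0 with hK3
  have e3 : (L3*M3*K3)*(n*n) = (n+P0*n+P0*P1)*(n+P1*n+P1*P2)*(n+P2*n+P2*P0) := by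
    rw [← vU, ← vV, ← vS]
    linear_combination -(L3*M3*K3) * ((s'*u'*v')*hN + n*hN')
  have e1 : (n+P0*n+P0*P1)*(n+P1*n+P1*P2)*(n+P2*n+P2*P0)
      = n^2*((1+P0+P0*P1)*(1+P1+P1*P2)*(1+P2+P2*P0)) := by
    rw [hL3] at *
    linear_combination (n + (-1)*n^2 + P2*n + (-1)*P2*n^2 + P1*n + (-1)*P1*n^2 + P1*P2*n
      + (-1)*P1*P2*n^2 + P0*n + (-1)*P0*n^2 + P0*P2*n + (-1)*P0*P2*n^2 + P0*P1*n
      + (-1)*P0*P1*n^2 + P0*P1*P2 + (-1)*P0*P1*P2*n^2) * hPn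
  have e2 : L3*M3*K3 = n*((1+P0+P0*P1)*(1+P1+P1*P2)*(1+P2+P2*P0)) := by
    rw [hL3, hM3, hK3]
    linear_combination ((1:K) + P2 + P1 + 2*P1*P2 + P1*P2^2 + P0 + 2*P0*P2 + 2*P0*P1
      + 4*P0*P1*P2 + 2*P0*P1*P2^2 + P0*P1^2 + 2*P0*P1^2*P2 + P0*P1^2*P2^2 + P0^2*P2
      + 2*P0^2*P1*P2 + P0^2*P1*P2^2 + P0^2*P1^2*P2 + P0^2*P1^2*P2^2) * hPn
  have final : n^2*(n-1)*((1+P0+P0*P1)*(1+P1+P1*P2)*(1+P2+P2*P0)) = 0 := by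
    linear_combination e3 + e1 - (n*n)*e2
  have hn1' : n - 1 ≠ 0 := sub_ne_zero.mpr hn1
  have hn2 : n^2 ≠ 0 := pow_ne_zero _ hn0
  rcases mul_eq_zero.mp final with h | h
  · rcases mul_eq_zero.mp h with h | h
    · exact hn2 h
    · exact hn1' h
  · rcases mul_eq_zero.mp h with h | h
    · rcases mul_eq_zero.mp h with h | h
      · exact hd0 h
      · exact hd1 h
    · exact hd2 h

end AuxAlg

theorem stmt_8 (m : ℕ) (hm : 1 ≤ m) (q : ℕ) (hq : q = 2 ^ m)
    (K : Type*) [Field K] [Fintype K] (hK : Fintype.card K = q ^ 3)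
    (A B : K) (hA : A ≠ 0) (hB : B ≠ 0)
    (h1 : A ^ q * B = 1) :
    Function.Bijective (fun x : K => x ^ (q ^ 2 - q + 1) + A * x ^ (q ^ 2) + B * x) ↔
      B ^ (1 + q + q ^ 2) ≠ 1 := by
  classical
  have hq2 : 2 ≤ q := by
    rw [hq]
    calc 2 = 2^1 := (pow_one 2).symm
    _ ≤ 2^m := Nat.pow_le_pow_right (by norm_num) hm
  have hq1 : 1 ≤ q := by omega
  obtain ⟨r, hr⟩ : ∃ r, q = r + 1 := ⟨q - 1, by omega⟩
  haveI hfact : Fact (Nat.Prime 2) := ⟨Nat.prime_two⟩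
  haveI hKchar : CharP K 2 := by
    haveI hcp : CharP K (ringChar K) := ringChar.charP K
    obtain ⟨n, hp, hcard⟩ := FiniteField.card K (ringChar K)
    have h2 : ringChar K = 2 := by
      have hdvd : ringChar K ∣ 2 := by
        apply Nat.Prime.dvd_of_dvd_pow (n := m*3) hp
        have hcc : ringChar K ^ (n:ℕ) = 2 ^ (m*3) := by
          rw [← hcard, hK, hq, ← pow_mul]
        rw [← hcc]; exact dvd_pow_self _ (by positivity)
      exact (Nat.prime_dvd_prime_iff_eq hp Nat.prime_two).mp hdvd
    exact h2 ▸ hcp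
  have h2 : (2:K) = 0 := CharP.cast_eq_zero K 2
  have frobq : ∀ x y : K, (x+y)^q = x^q + y^q := fun x y => by
    rw [hq]; exact add_pow_char_pow x y 2 m
  have powcard : ∀ x : K, x^(q^3) = x := fun x => by rw [← hK]; exact FiniteField.pow_card x
  have frob_inj : ∀ x y : K, x^q = y^q → x = y := by
    intro x y h
    have h0 : (x+y)^q = 0 := by rw [frobq]; linear_combination h + (y^q)*h2
    have h1' : x + y = 0 := pow_eq_zero_iff (by omega) |>.mp h0
    linear_combination h1' - y*h2
  -- rewrite the function
  have hf : (fun x : K => x ^ (q^2 - q + 1) + A * x ^ (q^2) + B * x)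
      = fun x : K => x * (A*((x^(q-1))^(q+1)) + (x^(q-1))^q + B) := by
    funext x
    have e0 : q - 1 = r := by omega
    have e1 : q^2 - q + 1 = r*(r+1) + 1 := by
      have : q^2 = r*(r+1) + q := by rw [hr]; ring
      omega
    have e2 : q^2 = r*(r+2) + 1 := by rw [hr]; ring
    rw [e0, e1, e2, hr]
    rw [pow_succ, pow_succ, ← pow_mul, ← pow_mul]
    ring
  rw [hf]
  -- basic powers of B
  have hAB : A * B^(q^2) = 1 := by
    have h' := congrArg (fun w : K => w^(q^2)) h1
    simp only [mul_pow, one_pow, ← pow_mul] at h'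
    rw [show q*q^2 = q^3 by ring, powcard A] at h'
    exact h'
  have hb2 : (B^(q^2))^q = B := by
    rw [← pow_mul, show q^2*q = q^3 by ring, powcard]
  have hb1 : (B^(q^2))^(q+1) = B * B^(q^2) := by
    rw [← pow_mul, show q^2*(q+1) = q^3 + q^2 by ring, pow_add, powcard]
  -- h(B^{q²} s) = B * R(s)
  have hht : ∀ s : K, A*(B^(q^2)*s)^(q+1) + (B^(q^2)*s)^q + B = B*(s^(q+1)+s^q+1) := by
    intro s
    rw [mul_pow, mul_pow, hb1, hb2]
    linear_combination (B*s^(q+1))*hAB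
  -- norm of a root of R is 1
  have hkey : ∀ s : K, s^(q+1)+s^q+1 = 0 → s^(1+q+q^2) = 1 := by
    intro s hR
    have e1 : s^q*(s+1) = 1 := by linear_combination hR - h2
    have e2 : s^(q^2)*(s^q+1) = 1 := by
      have h' := congrArg (fun w : K => w^q) e1
      simp only [mul_pow, one_pow, ← pow_mul, frobq, one_pow] at h'
      rw [show q*q = q^2 by ring] at h'
      exact h'
    have e12 : (s^q*(s+1))*(s^(q^2)*(s^q+1)) = 1 := by rw [e1, e2, mul_one]
    have key : s*s^q*s^(q^2) = 1 := by
      linear_combination e12 + (s^q*s^(q^2))*hR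
        - (s*s^q*s^q*s^(q^2) + s^q*s^(q^2) + s^q*s^q*s^(q^2))*h2
    rw [pow_add, pow_add, pow_one]
    linear_combination key
  -- (B^{q²})^{1+q+q²} = B^{1+q+q²}
  have hNBq2 : (B^(q^2))^(1+q+q^2) = B^(1+q+q^2) := by
    rw [← pow_mul, show q^2*(1+q+q^2) = q^2 + (q^3 + q^3*q) by ring, pow_add, pow_add, pow_mul,
      powcard]
    rw [pow_add, pow_add, pow_one]
    ring
  -- z^{q³-1} = 1 for z ≠ 0
  have hunit : ∀ z : K, z ≠ 0 → z^(q^3-1) = 1 := by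
    intro z hz
    have hc : z^(q^3-1)*z = 1*z := by
      rw [one_mul, ← pow_succ, show q^3 - 1 + 1 = q^3 by
        have h3 : 1 ≤ q^3 := Nat.one_le_pow _ _ (by omega)
        omega]
      exact powcard z
    exact mul_right_cancel₀ hz hc
  have hexp3 : (q-1)*(1+q+q^2) = q^3 - 1 := by
    have h' : q^3 = (q-1)*(1+q+q^2) + 1 := by
      rw [show q - 1 = r by omega, hr]; ring
    omega
  -- norm of x^{q-1} is 1
  have hnormz : ∀ z : K, z ≠ 0 → (z^(q-1))^(1+q+q^2) = 1 := by
    intro z hz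
    rw [← pow_mul, hexp3]
    exact hunit z hz
  constructor
  · -- bijective → B^{1+q+q²} ≠ 1
    intro hbij
    intro hNB
    -- find a root of s^{q+1}+s^q+1 in K
    obtain ⟨a, ha⟩ : ∃ a : K, a^(q+1)+a^q+1 = 0 := by
      set L := AlgebraicClosure K
      haveI : CharP L 2 := charP_of_injective_algebraMap (algebraMap K L).injective 2
      have h2L : (2:L) = 0 := CharP.cast_eq_zero L 2
      have frobqL : ∀ x y : L, (x+y)^q = x^q + y^q := fun x y => by
        rw [hq]; exact add_pow_char_pow x y 2 m
      -- root in L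
      have hdq : ((X:L[X])^(q+1) + X^q + 1).degree = ((q+1 : ℕ) : WithBot ℕ) := by
        have hlt : ((X:L[X])^q + 1).degree < ((X:L[X])^(q+1)).degree := by
          rw [degree_X_pow]
          refine lt_of_le_of_lt (degree_add_le _ _) ?_
          rw [degree_X_pow, degree_one]
          refine max_lt ?_ ?_ <;> exact_mod_cast by omega
        rw [add_assoc, degree_add_eq_left_of_degree_lt hlt, degree_X_pow]
      obtain ⟨ρ, hρ0⟩ := IsAlgClosed.exists_root ((X:L[X])^(q+1) + X^q + 1)
        (by rw [hdq]; exact_mod_cast (by omega : (q+1:ℕ) ≠ 0))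
      have hρ : ρ^(q+1) + ρ^q + 1 = 0 := by simpa using hρ0
      -- ρ^{q³} = ρ
      have hρe : ρ*ρ^q + ρ^q + 1 = 0 := by linear_combination hρ
      have e1 : ρ^q*(ρ+1) = 1 := by linear_combination hρ - h2L
      have e2 : ρ^(q^2)*(ρ^q+1) = 1 := by
        have h' := congrArg (fun w : L => w^q) e1
        simp only [mul_pow, one_pow, ← pow_mul, frobqL, one_pow] at h'
        rw [show q*q = q^2 by ring] at h'
        exact h'
      have e3 : ρ^(q^3)*(ρ^(q^2)+1) = 1 := by
        have h' := congrArg (fun w : L => w^q) e2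
        simp only [mul_pow, one_pow, ← pow_mul, frobqL, one_pow] at h'
        rw [show q^2*q = q^3 by ring, show q*q = q^2 by ring] at h'
        exact h'
      have hX1 : ρ^q + 1 ≠ 0 := by
        intro h
        rw [h, mul_zero] at e2
        exact one_ne_zero e2.symm
      have k1 : ρ*(ρ^(q^2)+1)*(ρ^q+1) = 1*(ρ^q+1) := by
        linear_combination ρ*e2 + hρe + (ρ - ρ^q - 1)*h2L
      have k2 : ρ*(ρ^(q^2)+1) = 1 := mul_right_cancel₀ hX1 k1
      have hfix : ρ^(q^3) = ρ := by
        have hcomm : ρ^(q^3)*(ρ*(ρ^(q^2)+1)) = ρ*(ρ^(q^3)*(ρ^(q^2)+1)) := by ring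
        rw [k2, e3, mul_one, mul_one] at hcomm
        exact hcomm
      -- counting: ρ comes from K
      have hQpdeg : ((X:L[X])^(q^3) - X).degree = ((q^3 : ℕ) : WithBot ℕ) := by
        have hlt : (X:L[X]).degree < ((X:L[X])^(q^3)).degree := by
          rw [degree_X_pow, degree_X]
          exact_mod_cast (by nlinarith : 1 < q^3)
        rw [degree_sub_eq_left_of_degree_lt hlt, degree_X_pow]
      have hQpne : ((X:L[X])^(q^3) - X) ≠ 0 := by
        intro h
        rw [h, degree_zero] at hQpdeg
        exact WithBot.bot_ne_coe hQpdeg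
      have hsub : Finset.univ.image (algebraMap K L) ⊆ ((X:L[X])^(q^3) - X).roots.toFinset := by
        intro z hz
        obtain ⟨b, _, rfl⟩ := Finset.mem_image.mp hz
        rw [Multiset.mem_toFinset, mem_roots hQpne]
        simp only [IsRoot, eval_sub, eval_pow, eval_X]
        rw [← RingHom.map_pow, powcard b, sub_self]
      have hcardT : (Finset.univ.image (algebraMap K L)).card = q^3 := by
        rw [Finset.card_image_of_injective _ (algebraMap K L).injective, Finset.card_univ, hK]
      have hcard_le : (((X:L[X])^(q^3) - X).roots.toFinset).card ≤ q^3 := by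
        refine le_trans (Multiset.toFinset_card_le _) (le_trans (card_roots' _) ?_)
        rw [natDegree_eq_of_degree_eq_some hQpdeg]
      have heq : Finset.univ.image (algebraMap K L) = ((X:L[X])^(q^3) - X).roots.toFinset :=
        Finset.eq_of_subset_of_card_le hsub (by rw [hcardT]; exact hcard_le)
      have hρmem : ρ ∈ ((X:L[X])^(q^3) - X).roots.toFinset := by
        rw [Multiset.mem_toFinset, mem_roots hQpne]
        simp only [IsRoot, eval_sub, eval_pow, eval_X]
        rw [hfix, sub_self]
      rw [← heq] at hρmem
      obtain ⟨a, _, haρ⟩ := Finset.mem_image.mp hρmem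
      refine ⟨a, (algebraMap K L).injective ?_⟩
      push_cast [map_add, map_pow, map_one, map_zero]
      rw [haρ, hρ]
    -- use the root to kill injectivity
    have ha0 : a ≠ 0 := by
      intro h
      rw [h] at ha
      simp only [zero_pow (by omega : q+1 ≠ 0), zero_pow (by omega : q ≠ 0)] at ha
      norm_num at ha
    have hNa : a^(1+q+q^2) = 1 := hkey a ha
    set t := B^(q^2)*a with htdef
    have ht0 : t ≠ 0 := mul_ne_zero (pow_ne_zero _ hB) ha0
    have hNt : t^(1+q+q^2) = 1 := by
      rw [htdef, mul_pow, hNBq2, hNa, mul_one, hNB]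
    -- find x with x^(q-1) = t
    obtain ⟨x, hx0, hxq⟩ : ∃ x : K, x ≠ 0 ∧ x^(q-1) = t := by
      haveI : IsCyclic Kˣ := inferInstance
      obtain ⟨g, hg⟩ := IsCyclic.exists_generator (α := Kˣ)
      obtain ⟨k, hk0⟩ := hg (Units.mk0 t ht0)
      have hk : g ^ k = Units.mk0 t ht0 := hk0
      have horder : orderOf g = q^3 - 1 := by
        rw [orderOf_eq_card_of_forall_mem_zpowers hg, Nat.card_eq_fintype_card,
          Fintype.card_units, hK]
      have htu : (Units.mk0 t ht0)^(1+q+q^2) = 1 := by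
        apply Units.ext
        rw [Units.val_pow_eq_pow_val]
        simpa using hNt
      have hdvd : ((q^3-1:ℕ):ℤ) ∣ k * ((1+q+q^2 : ℕ):ℤ) := by
        rw [← horder, orderOf_dvd_iff_zpow_eq_one, zpow_mul, hk, zpow_natCast, htu]
      have h3 : 1 ≤ q^3 := Nat.one_le_pow _ _ (by omega)
      have hfac : ((q^3-1:ℕ):ℤ) = ((q:ℤ)-1)*((1+q+q^2 : ℕ):ℤ) := by
        push_cast [Nat.cast_sub h3]
        ring
      have hne : (((1+q+q^2:ℕ)):ℤ) ≠ 0 := by positivity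
      obtain ⟨c, hc⟩ := hfac ▸ hdvd
      have hdk : k = ((q:ℤ)-1)*c := mul_right_cancel₀ hne (by linear_combination hc)
      refine ⟨((g^c : Kˣ) : K), Units.ne_zero _, ?_⟩
      have hgc : ((g^c)^((q-1:ℕ)) : Kˣ) = Units.mk0 t ht0 := by
        rw [← hk, ← zpow_natCast (g^c) (q-1), ← zpow_mul]
        congr 1
        rw [hdk]
        push_cast [Nat.cast_sub hq1]
        ring
      calc ((g^c : Kˣ) : K)^(q-1) = (((g^c)^((q-1:ℕ)) : Kˣ) : K) :=
            (Units.val_pow_eq_pow_val _ _).symm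
      _ = t := by rw [hgc]; rfl
    -- f x = 0 = f 0 kills injectivity
    have hfx : x * (A*((x^(q-1))^(q+1)) + (x^(q-1))^q + B) = 0 := by
      rw [hxq, htdef, hht a, ha, mul_zero, mul_zero]
    have hxy : (fun z : K => z * (A*((z^(q-1))^(q+1)) + (z^(q-1))^q + B)) x
        = (fun z : K => z * (A*((z^(q-1))^(q+1)) + (z^(q-1))^q + B)) 0 := by
      show x * (A*((x^(q-1))^(q+1)) + (x^(q-1))^q + B)
          = 0 * (A*(((0:K)^(q-1))^(q+1)) + ((0:K)^(q-1))^q + B)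
      rw [hfx, zero_mul]
    exact hx0 (hbij.injective hxy)
  · -- B^{1+q+q²} ≠ 1 → bijective
    intro hNB1
    rw [← Finite.injective_iff_bijective]
    intro x y hxy
    dsimp only at hxy
    set c := (B^(q^2))⁻¹ with hcdef
    have hcB : ∀ z : K, B^(q^2) * (z^(q-1) * c) = z^(q-1) := by
      intro z
      rw [hcdef]
      field_simp
    have hsplitz : ∀ z : K, z ≠ 0 → (B^(1+q+q^2)) * ((z^(q-1)*c)^(1+q+q^2)) = 1 := by
      intro z hz
      have hsplit : (z^(q-1))^(1+q+q^2) = (B^(q^2))^(1+q+q^2) * ((z^(q-1)*c))^(1+q+q^2) := by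
        rw [← mul_pow, hcB z]
      rw [hnormz z hz, hNBq2] at hsplit
      exact hsplit.symm
    have hRnz : ∀ z : K, z ≠ 0 → (z^(q-1)*c)^(q+1) + (z^(q-1)*c)^q + 1 ≠ 0 := by
      intro z hz hcon
      apply hNB1
      have h' := hsplitz z hz
      rw [hkey _ hcon, mul_one] at h'
      exact h'
    have hg : ∀ z : K, A*((z^(q-1))^(q+1)) + (z^(q-1))^q + B
        = B*((z^(q-1)*c)^(q+1) + (z^(q-1)*c)^q + 1) := by
      intro z
      rw [← hht (z^(q-1)*c), hcB z]
    rw [hg x, hg y] at hxy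
    by_cases hx0 : x = 0
    · by_cases hy0 : y = 0
      · rw [hx0, hy0]
      · exfalso
        rw [hx0, zero_mul] at hxy
        rcases mul_eq_zero.mp hxy.symm with h | h
        · exact hy0 h
        rcases mul_eq_zero.mp h with h | h
        · exact hB h
        · exact hRnz y hy0 h
    · by_cases hy0 : y = 0
      · exfalso
        rw [hy0, zero_mul] at hxy
        rcases mul_eq_zero.mp hxy with h | h
        · exact hx0 h
        rcases mul_eq_zero.mp h with h | h
        · exact hB h
        · exact hRnz x hx0 h
      · -- main case : both nonzero
        set s := x^(q-1)*c with hsdef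
        set s' := y^(q-1)*c with hs'def
        have hs0 : s ≠ 0 := by
          rw [hsdef]
          exact mul_ne_zero (pow_ne_zero _ hx0) (inv_ne_zero (pow_ne_zero _ hB))
        have hs'0 : s' ≠ 0 := by
          rw [hs'def]
          exact mul_ne_zero (pow_ne_zero _ hy0) (inv_ne_zero (pow_ne_zero _ hB))
        have hRx : s^(q+1)+s^q+1 ≠ 0 := hRnz x hx0
        have hRy : s'^(q+1)+s'^q+1 ≠ 0 := hRnz y hy0
        by_cases hss : s = s'
        · rw [hss] at hxy
          exact mul_right_cancel₀ (mul_ne_zero hB hRy) hxy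
        · exfalso
          have hts : B^(q^2) * s = x^(q-1) := hcB x
          have hts' : B^(q^2) * s' = y^(q-1) := hcB y
          have hpow := congrArg (fun w : K => w^(q-1)) hxy
          simp only [mul_pow] at hpow
          rw [← hts, ← hts'] at hpow
          have hBB : B^(q^2)*B^(q-1) ≠ 0 :=
            mul_ne_zero (pow_ne_zero _ hB) (pow_ne_zero _ hB)
          have hP0eq : s*(s^(q+1)+s^q+1)^(q-1) = s'*(s'^(q+1)+s'^q+1)^(q-1) := by
            apply mul_left_cancel₀ hBB
            linear_combination hpow
          set P0 := s*(s^(q+1)+s^q+1)^(q-1) with hP0def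
          have hP0eq' : P0 = s'*(s'^(q+1)+s'^q+1)^(q-1) := hP0eq
          have hEgen : ∀ w : K, P0 = w*((w^(q+1)+w^q+1))^(q-1) →
              (P0*(w*w^q+w^q+1) = w*(w^q*(w^q)^q+(w^q)^q+1))
              ∧ (P0^q*(w^q*(w^q)^q+(w^q)^q+1) = w^q*((w^q)^q*w+w+1))
              ∧ ((P0^q)^q*((w^q)^q*w+w+1) = (w^q)^q*(w*w^q+w^q+1)) := by
            intro w hrep
            have hvq : ((w^q)^q)^q = w := by
              rw [← pow_mul, ← pow_mul, show q*(q*q) = q^3 by ring]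
              exact powcard w
            have hWu : w^(q+1)+w^q+1 = w*w^q+w^q+1 := by ring
            have hq11 : (w^(q+1)+w^q+1)^(q-1)*(w^(q+1)+w^q+1) = (w^(q+1)+w^q+1)^q := by
              rw [← pow_succ, show q-1+1 = q by omega]
            have hRq : (w^(q+1)+w^q+1)^q = w^q*(w^q)^q+(w^q)^q+1 := by
              rw [hWu, frobq, frobq, mul_pow, one_pow]
            have hE0w : P0*(w*w^q+w^q+1) = w*(w^q*(w^q)^q+(w^q)^q+1) := by
              calc P0*(w*w^q+w^q+1)
                  = w*((w^(q+1)+w^q+1)^(q-1)*(w^(q+1)+w^q+1)) := by rw [hrep, ← hWu]; ring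
                _ = w*(w^q*(w^q)^q+(w^q)^q+1) := by rw [hq11, hRq]
            have hE1w : P0^q*(w^q*(w^q)^q+(w^q)^q+1) = w^q*((w^q)^q*w+w+1) := by
              have h' := congrArg (fun z : K => z^q) hE0w
              simp only [mul_pow, frobq, one_pow] at h'
              rw [hvq] at h'
              linear_combination h'
            have hE2w : (P0^q)^q*((w^q)^q*w+w+1) = (w^q)^q*(w*w^q+w^q+1) := by
              have h' := congrArg (fun z : K => z^q) hE1w
              simp only [mul_pow, frobq, one_pow] at h'
              rw [hvq] at h'
              linear_combination h'
            exact ⟨hE0w, hE1w, hE2w⟩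
          obtain ⟨hE0, hE1, hE2⟩ := hEgen s hP0def
          obtain ⟨hE0', hE1', hE2'⟩ := hEgen s' hP0eq'
          set n := (B^(1+q+q^2))⁻¹ with hndef
          have hnormK : ∀ z : K, z ≠ 0 → (z^(q-1)*c)*((z^(q-1)*c)^q)*(((z^(q-1)*c)^q)^q) = n := by
            intro z hz
            have h' := hsplitz z hz
            have heq : (z^(q-1)*c)^(1+q+q^2) = n := by
              rw [hndef]
              exact eq_inv_of_mul_eq_one_right h'
            rw [← heq, pow_add, pow_add, pow_one, ← pow_mul, show q*q = q^2 by ring]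
          have hN : s*(s^q)*((s^q)^q) = n := by
            have h' := hnormK x hx0
            rw [← hsdef] at h'
            exact h'
          have hN' : s'*(s'^q)*((s'^q)^q) = n := by
            have h' := hnormK y hy0
            rw [← hs'def] at h'
            exact h'
          have hn0 : n ≠ 0 := by rw [hndef]; exact inv_ne_zero (pow_ne_zero _ hB)
          have hn1 : n ≠ 1 := by
            rw [hndef]
            intro h
            exact hNB1 (inv_eq_one.mp h)
          have hP0ne : P0 ≠ 0 := by
            rw [hP0def]
            exact mul_ne_zero hs0 (pow_ne_zero _ hRx)
          have hPn : P0*P0^q*(P0^q)^q = n := by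
            have hs13 : s*(s^q)*((s^q)^q) = s^(1+q+q^2) := by
              rw [pow_add, pow_add, pow_one, ← pow_mul, show q*q = q^2 by ring]
            have hR31 : (((s^(q+1)+s^q+1))^(q-1))^(1+q+q^2) = 1 := by
              rw [← pow_mul, hexp3]
              exact hunit _ hRx
            calc P0*P0^q*(P0^q)^q = P0^(1+q+q^2) := by
                  rw [pow_add, pow_add, pow_one, ← pow_mul, show q*q = q^2 by ring]
            _ = (s^(1+q+q^2))*((((s^(q+1)+s^q+1))^(q-1))^(1+q+q^2)) := by
                  rw [hP0def, mul_pow]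
            _ = n := by rw [hR31, mul_one, ← hs13, hN]
          have hune : s^q ≠ s'^q := fun h => hss (frob_inj _ _ h)
          have hvne : (s^q)^q ≠ (s'^q)^q := fun h => hune (frob_inj _ _ h)
          exact corelem h2 n P0 (P0^q) ((P0^q)^q) s (s^q) ((s^q)^q) s' (s'^q) ((s'^q)^q)
            hn0 hn1 hP0ne (pow_ne_zero _ hP0ne) (pow_ne_zero _ (pow_ne_zero _ hP0ne)) hPn
            hN hN' hE0 hE1 hE2 hE0' hE1' hE2' hss hune hvne
            (pow_ne_zero _ hs0) (pow_ne_zero _ (pow_ne_zero _ hs0)) hs0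
            (pow_ne_zero _ hs'0) (pow_ne_zero _ (pow_ne_zero _ hs'0)) hs'0
end

section
/- Let q = 2^m with m a positive integer and let K be a finite field with q^3 elements. Let A, B ∈ K satisfy E(A,B) = 0. Then (A^q·B + 1)^(1+q+q^2) = (A + B^(1+q))^(1+q+q^2). -/
theorem stmt_9 (m : ℕ) (hm : 1 ≤ m) (q : ℕ) (hq : q = 2 ^ m)
    (K : Type*) [Field K] [Fintype K] (hK : Fintype.card K = q ^ 3)
    (A B : K)
    (hE : A ^ (1 + q + q ^ 2) + A * B ^ (q ^ 2) + A ^ q * B + A ^ (q ^ 2) * B ^ q +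
        B ^ (1 + q + q ^ 2) + 1 = 0) :
    (A ^ q * B + 1) ^ (1 + q + q ^ 2) = (A + B ^ (1 + q)) ^ (1 + q + q ^ 2) := by
  -- characteristic 2
  have hchar := ringChar.charP K
  set p := ringChar K with hpdef
  have hp : p.Prime := CharP.char_is_prime K p
  obtain ⟨n, hn, hcard⟩ := FiniteField.card K p
  have hp2 : p = 2 := by
    have hdvd : p ∣ 2 ^ (m * 3) := by
      rw [pow_mul, ← hq, ← hK, hcard]
      exact dvd_pow_self p (PNat.pos n).ne'
    exact (Nat.prime_dvd_prime_iff_eq hp Nat.prime_two).mp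
      (hp.dvd_of_dvd_pow hdvd)
  rw [hp2] at hchar
  haveI := hchar
  have htwo : (2 : K) = 0 := by
    have := CharP.cast_eq_zero K 2
    exact_mod_cast this
  -- Frobenius facts
  have frobA : ∀ x y : K, (x + y) ^ q = x ^ q + y ^ q := fun x y => by
    rw [hq]; haveI : Fact (Nat.Prime 2) := ⟨Nat.prime_two⟩; exact add_pow_char_pow x y 2 m
  have hq2 : ∀ x : K, x ^ q ^ 2 = (x ^ q) ^ q := fun x => by rw [← pow_mul, sq]
  have hN : ∀ x : K, x ^ (1 + q + q ^ 2) = x * x ^ q * (x ^ q) ^ q := fun x => by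
    rw [pow_add, pow_add, pow_one, hq2]
  have hcube : ∀ x : K, ((x ^ q) ^ q) ^ q = x := fun x => by
    rw [← pow_mul, ← pow_mul]
    have h3 : q * (q * q) = q ^ 3 := by ring
    rw [h3, ← hK, FiniteField.pow_card]
  have hB1q : B ^ (1 + q) = B * B ^ q := by rw [pow_add, pow_one]
  -- expand both sides
  have e1 : (A ^ q * B + 1) ^ q = (A ^ q) ^ q * B ^ q + 1 := by
    rw [frobA, mul_pow, one_pow]
  have e2 : ((A ^ q) ^ q * B ^ q + 1) ^ q = A * (B ^ q) ^ q + 1 := by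
    rw [frobA, mul_pow, one_pow, hcube]
  have e3 : (A + B ^ (1 + q)) ^ q = A ^ q + B ^ q * (B ^ q) ^ q := by
    rw [hB1q, frobA, mul_pow]
  have e4 : (A ^ q + B ^ q * (B ^ q) ^ q) ^ q = (A ^ q) ^ q + (B ^ q) ^ q * B := by
    rw [frobA, mul_pow, hcube]
  rw [hN, hN, e1, e2, e3, e4, hB1q]
  rw [hN, hN, hq2, hq2] at hE
  linear_combination (B * B ^ q * (B ^ q) ^ q + 1) * hE -
    (A * A ^ q * (A ^ q) ^ q + A * B * B ^ q * ((B ^ q) ^ q) ^ 2 +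
      A ^ q * B ^ 2 * B ^ q * (B ^ q) ^ q + (A ^ q) ^ q * B * (B ^ q) ^ 2 * (B ^ q) ^ q +
      B ^ 2 * (B ^ q) ^ 2 * ((B ^ q) ^ q) ^ 2 + B * B ^ q * (B ^ q) ^ q) * htwo
end

section
/- Let q = 2^m with m a positive integer and let K be a finite field with q^3 elements. Let A, B ∈ K with A + B^(1+q) ≠ 0, and set u = (A^q·B + 1)/(A + B^(1+q)). Then u^q + A·u^(q+1) + B = B^(1+q)·E(A,B) / ((A + B^(1+q))·(A^q + B^(q+q^2))). -/
theorem stmt_10 (m : ℕ) (hm : 1 ≤ m) (q : ℕ) (hq : q = 2 ^ m)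
    (K : Type*) [Field K] [Fintype K] (hK : Fintype.card K = q ^ 3)
    (A B : K) (hAB : A + B ^ (1 + q) ≠ 0)
    (u : K) (hu : u = (A ^ q * B + 1) / (A + B ^ (1 + q))) :
    u ^ q + A * u ^ (q + 1) + B =
      B ^ (1 + q) *
          (A ^ (1 + q + q ^ 2) + A * B ^ (q ^ 2) + A ^ q * B + A ^ (q ^ 2) * B ^ q +
            B ^ (1 + q + q ^ 2) + 1) /
        ((A + B ^ (1 + q)) * (A ^ q + B ^ (q + q ^ 2))) := by
  have hp : (ringChar K).Prime := CharP.char_is_prime K (ringChar K)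
  have hchar : CharP K 2 := by
    obtain ⟨n, hn, hcard⟩ := FiniteField.card K (ringChar K)
    have key : ringChar K ^ (n : ℕ) = 2 ^ (m * 3) := by
      rw [← hcard, hK, hq, ← pow_mul]
    have hd : ringChar K ∣ 2 ^ (m * 3) := key ▸ dvd_pow_self _ n.pos.ne'
    have := hp.dvd_of_dvd_pow hd
    have h2 : ringChar K = 2 := (Nat.prime_dvd_prime_iff_eq hp Nat.prime_two).mp this
    exact h2 ▸ ringChar.charP K
  haveI := hchar
  haveI : Fact (Nat.Prime 2) := ⟨Nat.prime_two⟩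
  have frob : ∀ x y : K, (x + y) ^ q = x ^ q + y ^ q := by
    intro x y
    rw [hq]
    exact add_pow_char_pow ..
  have hDq : (A + B ^ (1 + q)) ^ q = A ^ q + B ^ (q + q ^ 2) := by
    rw [frob, ← pow_mul]
    congr 1
    ring
  have hDq0 : A ^ q + B ^ (q + q ^ 2) ≠ 0 := by
    rw [← hDq]
    exact pow_ne_zero _ hAB
  have hN : u * (A + B ^ (1 + q)) = A ^ q * B + 1 := by
    rw [hu, div_mul_cancel₀ _ hAB]
  have hNq : u ^ q * (A ^ q + B ^ (q + q ^ 2)) = A ^ (q ^ 2) * B ^ q + 1 := by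
    have := congrArg (· ^ q) hN
    simp only [mul_pow, hDq, frob, one_pow] at this
    rw [this, ← pow_mul, ← pow_two]
  have h2 : (2 : K) = 0 := by exact_mod_cast hchar.cast_eq_zero
  rw [eq_div_iff (mul_ne_zero hAB hDq0)]
  linear_combination ((A + B ^ (1 + q)) + A * u * (A + B ^ (1 + q))) * hNq +
    A * (A ^ (q ^ 2) * B ^ q + 1) * hN +
    (A * A ^ (q ^ 2) * B ^ q + A + A * B * A ^ q) * h2
end

section
/- Let q = 2^m with m a positive integer and let K be a finite field with q^3 elements. Let A, B ∈ K be nonzero with A = B^(1+q) and E(A,B) = 0. Then A^(1+q+q^2) = 1 and B^(1+q+q^2) = 1. -/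
theorem stmt_11 (m : ℕ) (hm : 1 ≤ m) (q : ℕ) (hq : q = 2 ^ m)
    (K : Type*) [Field K] [Fintype K] (hK : Fintype.card K = q ^ 3)
    (A B : K) (hA : A ≠ 0) (hB : B ≠ 0)
    (h1 : A = B ^ (1 + q))
    (hE : A ^ (1 + q + q ^ 2) + A * B ^ (q ^ 2) + A ^ q * B + A ^ (q ^ 2) * B ^ q +
        B ^ (1 + q + q ^ 2) + 1 = 0) :
    A ^ (1 + q + q ^ 2) = 1 ∧ B ^ (1 + q + q ^ 2) = 1 := by
  -- characteristic 2
  have h2 : (2 : K) = 0 := by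
    have hc : ((Fintype.card K : ℕ) : K) = 0 := FiniteField.cast_card_eq_zero K
    rw [hK, hq, ← pow_mul] at hc
    push_cast at hc
    exact pow_eq_zero_iff (by positivity) |>.mp hc
  have hB3 : B ^ (q ^ 3) = B := by
    rw [← hK]; exact FiniteField.pow_card B
  set n : K := B ^ (1 + q + q ^ 2) with hn
  have t1 : A ^ (1 + q + q ^ 2) = n ^ 2 := by
    rw [h1, ← pow_mul]
    have e : (1 + q) * (1 + q + q ^ 2) = (1 + q + q ^ 2) + ((q + q ^ 2) + q ^ 3) := by ring
    rw [e, pow_add, pow_add B (q + q ^ 2) (q ^ 3), hB3, hn]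
    rw [← pow_succ, ← pow_add, ← pow_mul]
    congr 1
    ring
  have t2 : A * B ^ (q ^ 2) = n := by
    rw [h1, ← pow_add]
  have t3 : A ^ q * B = n := by
    rw [h1, ← pow_mul, ← pow_succ]
    congr 1
    ring
  have t4 : A ^ (q ^ 2) * B ^ q = n := by
    rw [h1, ← pow_mul, ← pow_add]
    have e : (1 + q) * q ^ 2 + q = (q ^ 2 + q) + q ^ 3 := by ring
    rw [e, pow_add, hB3, ← pow_succ]
    congr 1
    ring
  rw [t1, t2, t3, t4] at hE
  have hnn : ∀ x : K, x + x = 0 := fun x => by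
    rw [← two_mul, h2, zero_mul]
  have hE2 : n ^ 2 + 1 = 0 := by
    have : n ^ 2 + n + n + n + n + 1 = n ^ 2 + 1 + ((n + n) + (n + n)) := by ring
    rw [this, hnn, add_zero] at hE
    exact hE
  have hsq : (n + 1) ^ 2 = 0 := by
    have : (n + 1) ^ 2 = n ^ 2 + 1 + 2 * n := by ring
    rw [this, h2, zero_mul, add_zero, hE2]
  have hn1 : n = 1 := by
    have := pow_eq_zero_iff (n := 2) (by norm_num) |>.mp hsq
    have h1' : n = -1 := by linear_combination this
    rw [h1']
    linear_combination -h2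
  refine ⟨?_, hn1⟩
  rw [t1, hn1, one_pow]
end

section
/- Let q = 2^m with m a positive integer and let K be a finite field with q^3 elements. Let A, B ∈ K be nonzero. Then there exists x ∈ K with x ≠ 0 and f_{A,B}(x) = 0 if and only if there exists u ∈ K with u^(1+q+q^2) = 1 and u^q + A·u^(q+1) + B = 0. -/
theorem stmt_12 (m : ℕ) (hm : 1 ≤ m) (q : ℕ) (hq : q = 2 ^ m)
    (K : Type*) [Field K] [Fintype K] (hK : Fintype.card K = q ^ 3)
    (A B : K) (hA : A ≠ 0) (hB : B ≠ 0) :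
    (∃ x : K, x ≠ 0 ∧ x ^ (q ^ 2 - q + 1) + A * x ^ (q ^ 2) + B * x = 0) ↔
      (∃ u : K, u ^ (1 + q + q ^ 2) = 1 ∧ u ^ q + A * u ^ (q + 1) + B = 0) := by
  classical
  have hq2 : 2 ≤ q := by
    subst hq
    calc 2 = 2 ^ 1 := (pow_one 2).symm
    _ ≤ 2 ^ m := Nat.pow_le_pow_right (by norm_num) hm
  clear hq hm
  obtain ⟨r, rfl⟩ : ∃ r, q = r + 1 := ⟨q - 1, by omega⟩
  have hr1 : 1 ≤ r := by omega
  -- exponent identities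
  have e1 : r * (r + 1) + 1 = (r + 1) ^ 2 - (r + 1) + 1 := by
    have h : (r + 1) ^ 2 = r * (r + 1) + (r + 1) := by ring
    omega
  have e2 : r * ((r + 1) + 1) + 1 = (r + 1) ^ 2 := by
    have h : (r + 1) ^ 2 = r * ((r + 1) + 1) + 1 := by ring
    omega
  have e3 : r * (1 + (r + 1) + (r + 1) ^ 2) = (r + 1) ^ 3 - 1 := by
    have h : (r + 1) ^ 3 = r * (1 + (r + 1) + (r + 1) ^ 2) + 1 := by ring
    omega
  -- factorization identity
  have key : ∀ x : K, x ^ ((r + 1) ^ 2 - (r + 1) + 1) + A * x ^ ((r + 1) ^ 2) + B * x =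
      ((x ^ r) ^ (r + 1) + A * (x ^ r) ^ ((r + 1) + 1) + B) * x := by
    intro x
    rw [← e1, ← e2, ← pow_mul, ← pow_mul, pow_succ, pow_succ]
    ring
  constructor
  · rintro ⟨x, hx, hfx⟩
    refine ⟨x ^ r, ?_, ?_⟩
    · rw [← pow_mul, e3, ← hK]
      exact FiniteField.pow_card_sub_one_eq_one x hx
    · have h := (key x).symm.trans hfx
      rcases mul_eq_zero.mp h with h | h
      · exact h
      · exact absurd h hx
  · rintro ⟨u, hu1, hu2⟩
    have hu0 : u ≠ 0 := by
      intro h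
      rw [h, zero_pow (by positivity)] at hu1
      exact zero_ne_one hu1
    obtain ⟨x, hx0, hxu⟩ : ∃ x : K, x ≠ 0 ∧ x ^ r = u := by
      set u' : Kˣ := Units.mk0 u hu0 with hu'
      have hu1' : u' ^ (1 + (r + 1) + (r + 1) ^ 2) = 1 := by
        ext
        push_cast [hu']
        exact hu1
      obtain ⟨g, hg⟩ := IsCyclic.exists_generator (α := Kˣ)
      obtain ⟨k, hk⟩ := Subgroup.mem_zpowers_iff.mp (hg u')
      have hord : orderOf g = Nat.card Kˣ := orderOf_eq_card_of_forall_mem_zpowers hg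
      have hcard : Nat.card Kˣ = (r + 1) ^ 3 - 1 := by
        rw [Nat.card_eq_fintype_card, Fintype.card_units, hK]
      have hpow : g ^ (k * ((1 + (r + 1) + (r + 1) ^ 2 : ℕ) : ℤ)) = 1 := by
        rw [zpow_mul, hk, zpow_natCast]
        exact hu1'
      have hdvd : (((r + 1) ^ 3 - 1 : ℕ) : ℤ) ∣ k * ((1 + (r + 1) + (r + 1) ^ 2 : ℕ) : ℤ) := by
        rw [← hcard, ← hord]
        exact orderOf_dvd_iff_zpow_eq_one.mpr hpow
      rw [← e3] at hdvd
      push_cast at hdvd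
      have hM : ((1 : ℤ) + ((r : ℤ) + 1) + ((r : ℤ) + 1) ^ 2) ≠ 0 := by positivity
      have hrk : (r : ℤ) ∣ k := (mul_dvd_mul_iff_right hM).mp hdvd
      obtain ⟨j, hj⟩ := hrk
      refine ⟨(g ^ j : Kˣ), Units.ne_zero _, ?_⟩
      have hpw : (g ^ j) ^ (r : ℕ) = u' := by
        rw [← zpow_natCast (g ^ j), ← zpow_mul, mul_comm, ← hj, hk]
      calc ((g ^ j : Kˣ) : K) ^ r = (((g ^ j) ^ (r : ℕ) : Kˣ) : K) := by push_cast; ring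
      _ = u := by rw [hpw]; rfl
    refine ⟨x, hx0, ?_⟩
    rw [key x, hxu, hu2, zero_mul]
end

section
/- Let q = 2^m with m a positive integer and let K be a finite field with q^3 elements. Then the set of y ∈ K satisfying y^(q+1) + y^q + 1 = 0 has exactly q + 1 elements, and every such y satisfies y^(1+q+q^2) = 1. -/
/-!
In characteristic 2 a root `r` of `X ^ (q + 1) + X ^ q + 1` satisfies `r ^ q * (r + 1) = 1`;
the Frobenius `x ↦ x ^ q` turns this into `r ^ q ^ 2 * (r ^ q + 1) = 1`, and the two equations
combine to `r ^ (1 + q + q ^ 2) = 1`. The same holds for the root `r ^ q`, whence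
`r ^ q ^ 3 = r`. So the trinomial divides `X ^ q ^ 3 - X = ∏ a ∈ K, (X - a)`, and its `q + 1`
roots are all in `K` and distinct.
-/

open Polynomial

noncomputable def qTrinomial (R : Type*) [CommRing R] (q : ℕ) : R[X] := X ^ (q + 1) + X ^ q + 1

section Trinomial

variable {R : Type*} [CommRing R] {q : ℕ}

@[simp]
theorem eval_qTrinomial (r : R) : (qTrinomial R q).eval r = r ^ (q + 1) + r ^ q + 1 := by
  simp [qTrinomial]

@[simp]
theorem map_qTrinomial {S : Type*} [CommRing S] (φ : R →+* S) :
    (qTrinomial R q).map φ = qTrinomial S q := by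
  simp [qTrinomial]

theorem monic_qTrinomial : (qTrinomial R q).Monic := by
  unfold qTrinomial; monicity!

theorem natDegree_qTrinomial [Nontrivial R] : (qTrinomial R q).natDegree = q + 1 := by
  unfold qTrinomial; compute_degree!

end Trinomial

section CharTwo

variable {R : Type*} [CommRing R] [CharP R 2] {m : ℕ} {r : R}

theorem isRoot_qTrinomial_pow_two_pow (h : (qTrinomial R (2 ^ m)).IsRoot r) :
    (qTrinomial R (2 ^ m)).IsRoot (r ^ 2 ^ m) := by
  have := congrArg (iterateFrobenius R 2 m) h
  simp only [eval_qTrinomial, map_add, map_pow, map_one, map_zero, iterateFrobenius_def] at this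
  simpa [pow_right_comm _ (2 ^ m)] using this

theorem pow_one_add_add_sq_eq_one_of_isRoot_qTrinomial (h : (qTrinomial R (2 ^ m)).IsRoot r) :
    r ^ (1 + 2 ^ m + (2 ^ m) ^ 2) = 1 := by
  have hr : r ^ (2 ^ m + 1) + r ^ 2 ^ m + 1 = 0 := by simpa using h
  have hrq : (r ^ 2 ^ m) ^ (2 ^ m + 1) + (r ^ 2 ^ m) ^ 2 ^ m + 1 = 0 := by
    simpa using isRoot_qTrinomial_pow_two_pow h
  rw [pow_add, pow_add, pow_one, sq, pow_mul]
  linear_combination (r ^ 2 ^ m) ^ 2 ^ m * hr - hrq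

theorem pow_pow_three_eq_self_of_isRoot_qTrinomial (h : (qTrinomial R (2 ^ m)).IsRoot r) :
    r ^ (2 ^ m) ^ 3 = r := by
  set q := 2 ^ m
  have hr := pow_one_add_add_sq_eq_one_of_isRoot_qTrinomial h
  have hrq := pow_one_add_add_sq_eq_one_of_isRoot_qTrinomial (isRoot_qTrinomial_pow_two_pow h)
  rw [← pow_mul, show q * (1 + q + q ^ 2) = q + q ^ 2 + q ^ 3 by ring] at hrq
  rw [pow_add, pow_add] at hr hrq
  calc r ^ q ^ 3 = r ^ q ^ 3 * (r ^ 1 * r ^ q * r ^ q ^ 2) := by rw [hr, mul_one]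
    _ = r * (r ^ q * r ^ q ^ 2 * r ^ q ^ 3) := by ring
    _ = r := by rw [hrq, mul_one]

end CharTwo

theorem qTrinomial_dvd_X_pow_pow_three_sub_X {K : Type*} [Field K] [CharP K 2] (m : ℕ) :
    qTrinomial K (2 ^ m) ∣ X ^ (2 ^ m) ^ 3 - X := by
  set f := qTrinomial K (2 ^ m)
  have : Nontrivial (AdjoinRoot f) := AdjoinRoot.nontrivial f <|
    (natDegree_pos_iff_degree_pos.mp (by rw [natDegree_qTrinomial]; exact Nat.succ_pos _)).ne'
  have : CharP (AdjoinRoot f) 2 := charP_of_injective_algebraMap' K 2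
  have hroot : (qTrinomial _ (2 ^ m)).IsRoot (AdjoinRoot.root f) := by
    simpa [f] using AdjoinRoot.isRoot_root f
  rw [← AdjoinRoot.mk_eq_zero, map_sub, map_pow, AdjoinRoot.mk_X, sub_eq_zero]
  exact pow_pow_three_eq_self_of_isRoot_qTrinomial hroot

theorem FiniteField.ncard_setOf_isRoot_of_dvd_X_pow_card_sub_X {K : Type*} [Field K] [Fintype K]
    {f : K[X]} (hf : f ∣ X ^ Fintype.card K - X) :
    {y | f.IsRoot y}.ncard = f.natDegree := by
  classical
  have hg0 : (X ^ Fintype.card K - X : K[X]) ≠ 0 :=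
    X_pow_card_sub_X_ne_zero K Fintype.one_lt_card
  have hg : Splits (X ^ Fintype.card K - X : K[X]) := by
    rw [splits_iff_card_roots, roots_X_pow_card_sub_X,
      X_pow_card_sub_X_natDegree_eq K Fintype.one_lt_card]
    rfl
  have hf0 : f ≠ 0 := ne_zero_of_dvd_ne_zero hg0 hf
  have hnodup : f.roots.Nodup :=
    Multiset.nodup_of_le (roots.le_of_dvd hg0 hf) (roots_X_pow_card_sub_X K ▸ Finset.univ.nodup)
  rw [(hg.of_dvd hg0 hf).natDegree_eq_card_roots, ← Multiset.toFinset_card_of_nodup hnodup,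
    ← Set.ncard_coe_finset]
  congr; ext; simp [hf0]

theorem stmt_13_general (m : ℕ) (q : ℕ) (hq : q = 2 ^ m)
    (K : Type*) [Field K] [Fintype K] (hK : Fintype.card K = q ^ 3) :
    {y : K | y ^ (q + 1) + y ^ q + 1 = 0}.ncard = q + 1 ∧
      ∀ y : K, y ^ (q + 1) + y ^ q + 1 = 0 → y ^ (1 + q + q ^ 2) = 1 := by
  subst hq
  have : CharP K 2 := charP_of_card_eq_prime_pow (f := 3 * m) (by rw [hK, ← pow_mul, mul_comm])
  have hset : {y : K | y ^ (2 ^ m + 1) + y ^ 2 ^ m + 1 = 0} =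
      {y | (qTrinomial K (2 ^ m)).IsRoot y} := by
    simp
  refine ⟨?_, fun y hy ↦ pow_one_add_add_sq_eq_one_of_isRoot_qTrinomial (by simpa using hy)⟩
  rw [hset, FiniteField.ncard_setOf_isRoot_of_dvd_X_pow_card_sub_X
    (hK ▸ qTrinomial_dvd_X_pow_pow_three_sub_X m), natDegree_qTrinomial]

theorem stmt_13 (m : ℕ) (hm : 1 ≤ m) (q : ℕ) (hq : q = 2 ^ m)
    (K : Type*) [Field K] [Fintype K] (hK : Fintype.card K = q ^ 3) :
    {y : K | y ^ (q + 1) + y ^ q + 1 = 0}.ncard = q + 1 ∧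
      ∀ y : K, y ^ (q + 1) + y ^ q + 1 = 0 → y ^ (1 + q + q ^ 2) = 1 :=
  stmt_13_general m q hq K hK
end

section
/- Let q = 2^m with m a positive integer and let K be a finite field with q^3 elements. Let A ∈ K be nonzero with A^(1+q+q^2) = 1. Then there exists u ∈ K with u^(1+q+q^2) = 1 and u^q + A·u^(q+1) + A^(−q) = 0, where A^(−q) denotes the inverse of A^q in K. -/
theorem stmt_14 (m : ℕ) (hm : 1 ≤ m) (q : ℕ) (hq : q = 2 ^ m)
    (K : Type*) [Field K] [Fintype K] (hK : Fintype.card K = q ^ 3)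
    (A : K) (hA : A ≠ 0) (hnorm : A ^ (1 + q + q ^ 2) = 1) :
    ∃ u : K, u ^ (1 + q + q ^ 2) = 1 ∧ u ^ q + A * u ^ (q + 1) + (A ^ q)⁻¹ = 0 := by
  have hq2 : 2 ≤ q := by
    subst hq
    calc 2 = 2 ^ 1 := rfl
    _ ≤ 2 ^ m := Nat.pow_le_pow_right (by norm_num) hm
  -- the characteristic of K is 2
  have hchar : CharP K 2 := by
    have h1 : (ringChar K) ∣ q ^ 3 := by
      have := FiniteField.cast_card_eq_zero K
      rw [hK] at this
      exact (CharP.cast_eq_zero_iff K (ringChar K) _).mp this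
    have hp : (ringChar K).Prime := CharP.char_is_prime K (ringChar K)
    have h2 : ringChar K = 2 := by
      have hdd : (ringChar K) ∣ 2 := by
        have : (ringChar K) ∣ 2 ^ (m * 3) := by
          rwa [hq, ← pow_mul] at h1
        exact hp.dvd_of_dvd_pow this
      exact ((Nat.prime_dvd_prime_iff_eq hp Nat.prime_two).mp hdd)
    exact h2 ▸ ringChar.charP K
  have frob : ∀ a b : K, (a + b) ^ q = a ^ q + b ^ q := by
    intro a b; rw [hq]; exact add_pow_char_pow a b 2 m
  have self0 : ∀ a : K, a + a = 0 := fun a => CharTwo.add_self_eq_zero a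
  have hx3 : ∀ x : K, x ^ q ^ 3 = x := fun x => by rw [← hK]; exact FiniteField.pow_card x
  have e2 : ∀ x : K, x ^ q ^ 2 = (x ^ q) ^ q := fun x => by rw [pow_two, pow_mul]
  -- there exists a nonzero element of trace zero
  obtain ⟨z, hz0, hz⟩ : ∃ z : K, z ≠ 0 ∧ z + z ^ q + z ^ (q ^ 2) = 0 := by
    have e3 : ∀ x : K, (x ^ q ^ 2) ^ q = x ^ q ^ 3 := fun x => by
      rw [← pow_mul, ← pow_succ]
    have hTfix : ∀ x : K, (x + x ^ q + x ^ (q ^ 2)) ^ q = x + x ^ q + x ^ (q ^ 2) := by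
      intro x
      rw [frob, frob, e3, hx3, ← e2]
      ring
    by_cases hall : ∀ x : K, x + x ^ q + x ^ (q ^ 2) = x
    · exfalso
      have hinj : Function.Injective (fun x : K => x ^ q) := by
        intro a b hab
        simp only at hab
        have h1 : (a + b) ^ q = 0 := by rw [frob, hab]; exact self0 _
        have h2 : a + b = 0 := pow_eq_zero_iff (by omega : q ≠ 0) |>.mp h1
        linear_combination h2 - self0 b
      have hsurj := Finite.injective_iff_surjective.mp hinj
      have hfix : ∀ y : K, y ^ q = y := by
        intro y
        obtain ⟨x, rfl⟩ := hsurj y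
        have h := hall x
        have h2 : x ^ (q ^ 2) = x ^ q := by linear_combination h - self0 (x ^ q)
        simpa [e2] using h2
      -- contradiction via the cyclic group of units
      obtain ⟨g, hg⟩ := IsCyclic.exists_generator (α := Kˣ)
      have hord : orderOf g = Nat.card Kˣ := orderOf_eq_card_of_forall_mem_zpowers hg
      have hgq : g ^ q = g := by
        ext
        push_cast
        exact hfix _
      have hg1 : g ^ (q - 1) = 1 := by
        have hmul : g ^ (q - 1) * g = g := by
          rw [← pow_succ]
          have : q - 1 + 1 = q := by omega
          rw [this, hgq]
        exact mul_right_cancel (by rw [hmul, one_mul])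
      have hdvd : orderOf g ∣ q - 1 := orderOf_dvd_of_pow_eq_one hg1
      have hcard : Nat.card Kˣ = q ^ 3 - 1 := by
        classical
        rw [Nat.card_eq_fintype_card, Fintype.card_units, hK]
      have hle : q ^ 3 - 1 ≤ q - 1 :=
        Nat.le_of_dvd (by omega) (by rw [← hcard, ← hord]; exact hdvd)
      have h3 : q ^ 3 ≤ q := by omega
      have h4 : q * q ≤ 1 := by
        have h5 : q * (q * q) ≤ q * 1 := by
          calc q * (q * q) = q ^ 3 := by ring
          _ ≤ q := h3
          _ = q * 1 := by ring
        exact Nat.le_of_mul_le_mul_left h5 (by omega)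
      have h6 : 2 * 2 ≤ q * q := Nat.mul_le_mul hq2 hq2
      linarith
    · push_neg at hall
      obtain ⟨x, hx⟩ := hall
      refine ⟨x + x ^ q + x ^ (q ^ 2) + x, ?_, ?_⟩
      · intro h0
        exact hx (by linear_combination h0 - self0 x)
      · set t := x + x ^ q + x ^ (q ^ 2) with ht
        have h1 : (t + x) ^ q = t + x ^ q := by rw [frob, hTfix]
        have h2 : (t + x) ^ (q ^ 2) = t + x ^ (q ^ 2) := by
          rw [e2, h1, frob, hTfix, ← e2]
        rw [h1, h2, ht]
        linear_combination 3 * self0 (x + x ^ q + x ^ (q ^ 2)) - self0 x - self0 (x ^ q)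
          - self0 (x ^ (q ^ 2))
  -- now take u = z / z^q / A
  have hzq : z ^ q ≠ 0 := pow_ne_zero _ hz0
  have hzq2 : z ^ (q ^ 2) ≠ 0 := pow_ne_zero _ hz0
  have hAq : A ^ q ≠ 0 := pow_ne_zero _ hA
  refine ⟨z * (z ^ q)⁻¹ * A⁻¹, ?_, ?_⟩
  · have key : z ^ (q * (1 + q + q ^ 2)) = z ^ (1 + q + q ^ 2) := by
      have e1 : q * (1 + q + q ^ 2) = q + q ^ 2 + q ^ 3 := by ring
      rw [e1, pow_add, pow_add, hx3, pow_add, pow_add]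
      ring
    rw [mul_pow, mul_pow, inv_pow, inv_pow, hnorm, ← pow_mul, key, inv_one, mul_one,
      mul_inv_cancel₀ (pow_ne_zero _ hz0)]
  · have eq1 : (z * (z ^ q)⁻¹ * A⁻¹) ^ q = z ^ q * (z ^ (q ^ 2))⁻¹ * (A ^ q)⁻¹ := by
      rw [mul_pow, mul_pow, inv_pow, inv_pow, e2]
    have eq2 : (z * (z ^ q)⁻¹ * A⁻¹) ^ (q + 1) = z ^ q * (z ^ (q ^ 2))⁻¹ * (A ^ q)⁻¹ *
        (z * (z ^ q)⁻¹ * A⁻¹) := by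
      rw [pow_succ, eq1]
    have hsum : z ^ q + z = z ^ (q ^ 2) := by linear_combination hz - self0 (z ^ (q ^ 2))
    have mid : A * (z ^ q * (z ^ (q ^ 2))⁻¹ * (A ^ q)⁻¹ * (z * (z ^ q)⁻¹ * A⁻¹)) =
        z * (z ^ (q ^ 2))⁻¹ * (A ^ q)⁻¹ := by
      field_simp
    rw [eq1, eq2, mid]
    calc z ^ q * (z ^ (q ^ 2))⁻¹ * (A ^ q)⁻¹ + z * (z ^ (q ^ 2))⁻¹ * (A ^ q)⁻¹ + (A ^ q)⁻¹
        = ((z ^ q + z) * (z ^ (q ^ 2))⁻¹ + 1) * (A ^ q)⁻¹ := by ring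
      _ = (1 + 1) * (A ^ q)⁻¹ := by rw [hsum, mul_inv_cancel₀ hzq2]
      _ = 0 := by rw [self0 (1 : K), zero_mul]
end

section
/- Let q = 2^m with m a positive integer and let K be a finite field with q^3 elements. Let A, B ∈ K be nonzero with A^q·B = 1 and A^(1+q+q^2) ≠ 1. Then f_{A,B}(x) = 0 implies x = 0 for all x ∈ K; that is, f_{A,B} has no nonzero root in K. -/
theorem stmt_15 (m : ℕ) (hm : 1 ≤ m) (q : ℕ) (hq : q = 2 ^ m)
    (K : Type*) [Field K] [Fintype K] (hK : Fintype.card K = q ^ 3)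
    (A B : K) (hA : A ≠ 0) (hB : B ≠ 0)
    (h1 : A ^ q * B = 1) (h2 : A ^ (1 + q + q ^ 2) ≠ 1) :
    ∀ x : K, x ^ (q ^ 2 - q + 1) + A * x ^ (q ^ 2) + B * x = 0 → x = 0 := by
  intro x hx
  by_contra hx0
  have hq2 : 2 ≤ q := by
    subst hq
    calc 2 = 2 ^ 1 := rfl
    _ ≤ 2 ^ m := Nat.pow_le_pow_right (by norm_num) hm
  have hqq : q ≤ q * q := Nat.le_mul_of_pos_left q (by omega)
  have hq2q : q ^ 2 = q * q := sq q
  -- characteristic 2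
  obtain ⟨p, hp⟩ := CharP.exists K
  haveI := hp
  have hp2 : p = 2 := by
    haveI : Fact p.Prime := ⟨CharP.char_is_prime K p⟩
    obtain ⟨n, hn1, hn2⟩ := FiniteField.card K p
    have hd : p ∣ 2 ^ (3 * m) := by
      have : (2:ℕ) ^ (3 * m) = p ^ (n:ℕ) := by
        rw [← hn2, hK, hq, ← pow_mul]
        ring_nf
      rw [this]
      exact dvd_pow_self p n.pos.ne'
    have := hn1.dvd_of_dvd_pow hd
    exact (Nat.prime_dvd_prime_iff_eq hn1 Nat.prime_two).mp this
  subst hp2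
  haveI : Fact (Nat.Prime 2) := ⟨Nat.prime_two⟩
  have frob : ∀ a b : K, (a + b) ^ q = a ^ q + b ^ q := by
    intro a b
    rw [hq]
    exact add_pow_char_pow (R := K) (p := 2) (n := m) a b
  set u : K := x ^ (q - 1) with hu_def
  have hu : u ≠ 0 := pow_ne_zero _ hx0
  -- rewrite the two big powers of x
  have e1 : x ^ (q ^ 2 - q + 1) = u ^ q * x := by
    rw [hu_def, ← pow_mul, ← pow_succ]
    congr 1
    have : (q - 1) * q = q * q - q := by rw [Nat.sub_mul, one_mul]
    omega
  have e2 : x ^ (q ^ 2) = u * u ^ q * x := by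
    rw [hu_def, ← pow_mul, ← pow_add, ← pow_succ]
    congr 1
    have : (q - 1) * q = q * q - q := by rw [Nat.sub_mul, one_mul]
    omega
  -- the main equation
  have E : u ^ q + A * (u * u ^ q) + B = 0 := by
    have h : (u ^ q + A * (u * u ^ q) + B) * x = 0 := by
      rw [e1, e2] at hx
      linear_combination hx
    rcases mul_eq_zero.mp h with h' | h'
    · exact h'
    · exact absurd h' hx0
  -- Frobenius of the main equation
  have E2 : (u ^ q) ^ q + A ^ q * u ^ q * (u ^ q) ^ q + B ^ q = 0 := by
    have h : (u ^ q + A * (u * u ^ q) + B) ^ q = 0 := by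
      rw [E]
      exact zero_pow (by omega)
    rw [frob, frob, mul_pow, mul_pow] at h
    linear_combination h
  -- norm of u is 1
  have N : u * u ^ q * (u ^ q) ^ q = 1 := by
    have hx3 : x ^ (q ^ 3 - 1) = 1 := by
      have := FiniteField.pow_card_sub_one_eq_one x hx0
      rwa [hK] at this
    have h1q3 : 1 ≤ q ^ 3 := Nat.one_le_pow _ _ (by omega)
    have hq3 : q ^ 3 = q * q * q := by ring
    calc u * u ^ q * (u ^ q) ^ q = x ^ ((q - 1) + (q - 1) * q + (q - 1) * q * q) := by
          rw [hu_def, ← pow_mul, ← pow_mul, ← pow_add, ← pow_add]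
      _ = x ^ (q ^ 3 - 1) := by
          congr 1
          have h1 : (q - 1) * q = q * q - q := by rw [Nat.sub_mul, one_mul]
          have h2 : (q - 1) * q * q = (q * q - q) * q := by rw [h1]
          have h3 : (q * q - q) * q = q * q * q - q * q := by rw [Nat.sub_mul]
          have h4 : q * q ≤ q * q * q := Nat.le_mul_of_pos_right _ (by omega)
          omega
      _ = 1 := hx3
  -- deduce A = B^q * B
  have hA1 : A = B ^ q * B := by
    linear_combination (u ^ q) ^ q * E - B * E2 - A * N + u ^ q * (u ^ q) ^ q * h1
  -- contradiction with h2
  apply h2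
  have hB1 : B ^ (q ^ 2 + q + 1) = 1 := by
    have hAq : A ^ q = B ^ ((q + 1) * q) := by
      rw [hA1, ← pow_succ, ← pow_mul]
    calc B ^ (q ^ 2 + q + 1) = B ^ ((q + 1) * q) * B := by
          rw [← pow_succ]; congr 1; ring
      _ = A ^ q * B := by rw [hAq]
      _ = 1 := h1
  calc A ^ (1 + q + q ^ 2) = (B ^ (q + 1)) ^ (1 + q + q ^ 2) := by
        rw [hA1, ← pow_succ]
    _ = (B ^ (q ^ 2 + q + 1)) ^ (q + 1) := by rw [← pow_mul, ← pow_mul]; congr 1; ring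
    _ = 1 := by rw [hB1, one_pow]
end

section
/- Let q = 2^m with m a positive integer and let K be a finite field with q^3 elements. Let A, B ∈ K and let u ∈ K satisfy u^(1+q+q^2) = 1 and u^q + A·u^(q+1) + B = 0. Then (A + B^(1+q))·u = A^q·B + 1. -/
theorem stmt_16 (m : ℕ) (hm : 1 ≤ m) (q : ℕ) (hq : q = 2 ^ m)
    (K : Type*) [Field K] [Fintype K] (hK : Fintype.card K = q ^ 3)
    (A B : K) (u : K) (hu1 : u ^ (1 + q + q ^ 2) = 1)
    (hu2 : u ^ q + A * u ^ (q + 1) + B = 0) :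
    (A + B ^ (1 + q)) * u = A ^ q * B + 1 := by
  -- characteristic 2
  obtain ⟨p, hp⟩ := CharP.exists K
  haveI := hp
  obtain ⟨n, hpp, hcard⟩ := FiniteField.card K p
  have hp2 : p = 2 := by
    have hdvd : p ∣ 2 ^ (m * 3) := by
      have h : (2 : ℕ) ^ (m * 3) = p ^ (n : ℕ) := by
        rw [pow_mul, ← hq, ← hK, hcard]
      rw [h]
      exact dvd_pow_self p n.pos.ne'
    exact (Nat.prime_dvd_prime_iff_eq hpp Nat.prime_two).mp
      (hpp.dvd_of_dvd_pow hdvd)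
  subst hp2
  haveI : CharP K 2 := hp
  have h2 : (2 : K) = 0 := by exact_mod_cast CharP.cast_eq_zero K 2
  subst hq
  set q := 2 ^ m with hqdef
  have hu0 : u ≠ 0 := by
    intro h
    rw [h, zero_pow (by positivity)] at hu1
    exact one_ne_zero hu1.symm
  have hv0 : u ^ q ≠ 0 := pow_ne_zero _ hu0
  -- Frobenius of hu2
  have hfrob : ∀ x y : K, (x + y) ^ q = x ^ q + y ^ q := fun x y =>
    add_pow_char_pow ..
  have hR2 : u ^ (q * q) + A ^ q * u ^ ((q + 1) * q) + B ^ q = 0 := by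
    have h := congrArg (· ^ q) hu2
    simp only [hfrob, mul_pow, ← pow_mul, zero_pow (by positivity : q ≠ 0)] at h
    exact h
  have hR2' : 1 + A ^ q * u ^ q + B ^ q * (u * u ^ q) = 0 := by
    linear_combination u ^ (1 + q) * hR2 - (1 + A ^ q * u ^ q) * hu1
  have key : ((A + B ^ (1 + q)) * u) * u ^ q = (A ^ q * B + 1) * u ^ q := by
    linear_combination (-1 : K) * hu2 + B * hR2' +
      (A * u * u ^ q - A ^ q * B * u ^ q) * h2
  exact mul_right_cancel₀ hv0 key
end
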